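/- arXiv:1607.05041 — 6 statements merged into one kernel-verified Lean document; each statement's English description precedes it below -/
import Mathlib

section
/- Let n ≥ 1 and ω > 0. Let d_i, a_{ij} : ℝ → ℝ (1 ≤ i, j ≤ n, j ≠ i) be continuous ω-periodic functions with d_i(t) > 0 and a_{ij}(t) ≥ 0 for all t ∈ ℝ. Assume there exist a vector u = (u_1, …, u_n) with all u_i > 0 and a time t_0 ∈ ℝ such that d_i(t)u_i ≥ Σ_{j≠i} a_{ij}(t)u_j for all t ∈ ℝ and all i, with strict inequality d_i(t_0)u_i > Σ_{j≠i} a_{ij}(t_0)u_j for all i. Then the linear periodic ODE system x_i'(t) = −d_i(t)x_i(t) + Σ_{j≠i} a_{ij}(t)x_j(t), i = 1, …, n, is exponentially asymptotically stable: there exist constants K ≥ 1 and α > 0 such that for every s ∈ ℝ and every differentiable function x : [s, ∞) → ℝⁿ satisfying the system for all t > s, one has max_i |x_i(t)| ≤ K e^{−α(t−s)} max_i |x_i(s)| for all t ≥ s. -/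
/-!
Write `y = u⁻¹ * x`, so that `‖y‖ = max_i |x_i| / u_i`, and let
`c(t) = min_i (d_i(t) u_i - ∑_{j ≠ i} a_{ij}(t) u_j) / u_i`. Since the `a_{ij}` are nonnegative, one
explicit Euler step of length `h` contracts `‖y‖` by the factor `1 - h c(t)`; hence the upper right
Dini derivative of `‖y‖` is at most `-c(t) ‖y‖`, and a comparison argument gives
`‖y(t)‖ ≤ exp (-∫_s^t c) ‖y(s)‖`. The rate `c` is continuous, `ω`-periodic, nonnegative and positive
at `t₀`, so its mean `α` over a period is positive and `∫_s^t c ≥ α (t - s) - C`.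
-/

open Real Set Filter Topology Finset MeasureTheory

theorem Function.Periodic.exists_average_mul_sub_le_intervalIntegral {g : ℝ → ℝ} {T : ℝ}
    (hg : Function.Periodic g T) (hT : 0 < T)
    (hint : ∀ p q, IntervalIntegrable g volume p q)
    (hI : 0 ≤ ∫ x in 0..T, g x) :
    ∃ C, ∀ s t, (∫ x in 0..T, g x) / T * (t - s) - C ≤ ∫ x in s..t, g x := by
  set I := ∫ x in 0..T, g x
  refine ⟨sSup ((fun t => ∫ x in 0..t, g x) '' Icc 0 T)
    - sInf ((fun t => ∫ x in 0..t, g x) '' Icc 0 T) + I, fun s t => ?_⟩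
  have hlow := hg.sInf_add_zsmul_le_integral_of_pos (hint 0 T) hT t
  have hup := hg.integral_le_sSup_add_zsmul_of_pos (hint 0 T) hT s
  have hfloor_t : (t / T - 1) * I ≤ (⌊t / T⌋ : ℝ) * I :=
    mul_le_mul_of_nonneg_right (by linarith [Int.lt_floor_add_one (t / T)]) hI
  have hfloor_s : (⌊s / T⌋ : ℝ) * I ≤ s / T * I := mul_le_mul_of_nonneg_right (Int.floor_le _) hI
  rw [zsmul_eq_mul] at hlow hup
  rw [← intervalIntegral.integral_interval_sub_left (hint 0 t) (hint 0 s)]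
  have : I / T * (t - s) = (t / T - 1) * I - s / T * I + I := by field_simp; ring
  linarith

theorem le_mul_exp_neg_integral_of_slope_lt_Ico {f c : ℝ → ℝ} {a b : ℝ} (hab : a ≤ b)
    (hf : ContinuousOn f (Icc a b)) (hfa : 0 ≤ f a) (hc : Continuous c)
    (hslope : ∀ x ∈ Ico a b, ∀ r, -c x * f x < r → ∃ᶠ z in 𝓝[>] x, slope f x z < r) :
    f b ≤ f a * exp (-∫ τ in a..b, c τ) := by
  -- `(f a + ε) * exp (∫ τ in a..z, (ε - c τ))` is a strict supersolution; then let `ε → 0`.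
  have hε : ∀ ε > 0, f b ≤ (f a + ε) * exp (∫ τ in a..b, (ε - c τ)) := by
    intro ε hε
    set B : ℝ → ℝ := fun z => (f a + ε) * exp (∫ τ in a..z, (ε - c τ))
    have hB : ∀ z, HasDerivAt B ((ε - c z) * B z) z := fun z => by
      have hG := ((by fun_prop : Continuous fun τ => ε - c τ).integral_hasStrictDerivAt a z)
      exact (hG.hasDerivAt.exp.const_mul (f a + ε)).congr_deriv (by simp only [B]; ring)
    refine image_le_of_liminf_slope_right_lt_deriv_boundary hf hslope (by simpa [B] using hε.le) hB
      (fun z _ hzB => ?_) (right_mem_Icc.2 hab)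
    have : 0 < B z := by positivity
    rw [hzB]
    nlinarith
  have hlim : Tendsto (fun ε => (f a + ε) * exp (∫ τ in a..b, (ε - c τ))) (𝓝[>] 0)
      (𝓝 (f a * exp (-∫ τ in a..b, c τ))) := by
    have hint : ∀ ε : ℝ, (∫ τ in a..b, (ε - c τ)) = ε * (b - a) - ∫ τ in a..b, c τ := fun ε => by
      rw [intervalIntegral.integral_sub intervalIntegrable_const (hc.intervalIntegrable a b),
        intervalIntegral.integral_const, smul_eq_mul, mul_comm]
    have hcont : Continuous fun ε : ℝ => (f a + ε) * exp (ε * (b - a) - ∫ τ in a..b, c τ) := by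
      fun_prop
    simpa only [hint, add_zero, zero_mul, zero_sub] using
      (hcont.tendsto 0).mono_left nhdsWithin_le_nhds
  exact ge_of_tendsto hlim (eventually_mem_nhdsWithin.mono hε)

theorem le_mul_exp_neg_integral_of_slope_lt {f c : ℝ → ℝ} {a b : ℝ} (hab : a ≤ b)
    (hf : ContinuousOn f (Icc a b)) (hf0 : ∀ x ∈ Ioc a b, 0 ≤ f x) (hc : Continuous c)
    (hslope : ∀ x ∈ Ioo a b, ∀ r, -c x * f x < r → ∃ᶠ z in 𝓝[>] x, slope f x z < r) :
    f b ≤ f a * exp (-∫ τ in a..b, c τ) := by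
  rcases hab.eq_or_lt with rfl | hab
  · simp
  have hcint : ∀ p q, IntervalIntegrable c volume p q := hc.intervalIntegrable
  have hstep : ∀ a' ∈ Ioc a b, f b ≤ f a' * exp (∫ τ in a..a', c τ) * exp (-∫ τ in a..b, c τ) := by
    intro a' ha'
    have h := le_mul_exp_neg_integral_of_slope_lt_Ico ha'.2
      (hf.mono (Icc_subset_Icc_left ha'.1.le)) (hf0 a' ha') hc
      (fun x hx => hslope x ⟨ha'.1.trans_le hx.1, hx.2⟩)
    refine h.trans_eq ?_
    rw [← intervalIntegral.integral_add_adjacent_intervals (hcint a a') (hcint a' b), mul_assoc,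
      ← exp_add]
    congr 2
    ring
  have hlim : Tendsto (fun a' => f a' * exp (∫ τ in a..a', c τ) * exp (-∫ τ in a..b, c τ))
      (𝓝[>] a) (𝓝 (f a * exp (∫ τ in a..a, c τ) * exp (-∫ τ in a..b, c τ))) := by
    have hfa : Tendsto f (𝓝[>] a) (𝓝 (f a)) :=
      (hf a (left_mem_Icc.2 hab.le)).mono_of_mem_nhdsWithin (Icc_mem_nhdsGT hab)
    have hprim := (intervalIntegral.continuous_primitive hcint a).continuousAt (x := a)
    exact ((hfa.mul (hprim.rexp.tendsto.mono_left nhdsWithin_le_nhds)).mul_const _)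
  rw [intervalIntegral.integral_same, exp_zero, mul_one] at hlim
  exact ge_of_tendsto hlim (eventually_of_mem (Ioc_mem_nhdsGT hab) hstep)

theorem eventually_slope_norm_lt_of_hasDerivAt {E : Type*} [NormedAddCommGroup E] [NormedSpace ℝ E]
    {γ : ℝ → E} {v : E} {t b r : ℝ} (hγ : HasDerivAt γ v t)
    (hstep : ∀ᶠ h in 𝓝[>] 0, ‖γ t + h • v‖ ≤ ‖γ t‖ + h * b) (hr : b < r) :
    ∀ᶠ z in 𝓝[>] t, slope (fun z => ‖γ z‖) t z < r := by
  have hslope : ∀ᶠ z in 𝓝[>] t, ‖slope γ t z - v‖ < r - b :=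
    ((hasDerivAt_iff_tendsto_slope.1 hγ).mono_left (nhdsWithin_mono _ fun z hz => ne_of_gt hz))
      |>.sub_const v |>.norm |>.eventually_lt_const (by simpa using hr)
  have hshift : Tendsto (fun z => z - t) (𝓝[>] t) (𝓝[>] 0) :=
    tendsto_nhdsWithin_of_tendsto_nhds_of_eventually_within _
      ((continuous_sub_right t).tendsto' t 0 (sub_self t) |>.mono_left nhdsWithin_le_nhds)
      (eventually_mem_nhdsWithin.mono fun z hz => sub_pos.2 (mem_Ioi.1 hz))
  filter_upwards [hslope, hshift.eventually hstep, self_mem_nhdsWithin] with z hz hzstep hz_gt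
  have hzt : 0 < z - t := sub_pos.2 hz_gt
  have hγz : γ z = (γ t + (z - t) • v) + (z - t) • (slope γ t z - v) := by
    rw [smul_sub, add_add_sub_cancel, add_comm, ← vadd_eq_add, sub_smul_slope_vadd]
  rw [slope_def_field, div_lt_iff₀ hzt]
  calc ‖γ z‖ - ‖γ t‖ ≤ (z - t) * b + (z - t) * ‖slope γ t z - v‖ := by
        have := norm_add_le (γ t + (z - t) • v) ((z - t) • (slope γ t z - v))
        rw [← hγz, norm_smul, Real.norm_of_nonneg hzt.le] at this
        linarith
    _ < r * (z - t) := by nlinarith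

section Cooperative

variable {ι : Type*} [Fintype ι] [DecidableEq ι]

def cooperativeField (d : ι → ℝ) (a : ι → ι → ℝ) (x : ι → ℝ) : ι → ℝ :=
  fun i => -d i * x i + ∑ j ∈ univ.erase i, a i j * x j

theorem norm_add_smul_cooperativeField_le [Nonempty ι] {d : ι → ℝ} {a : ι → ι → ℝ} {u x : ι → ℝ}
    {c h : ℝ} (ha : ∀ i j, j ≠ i → 0 ≤ a i j) (hu : ∀ i, 0 < u i)
    (hc : ∀ i, c * u i ≤ d i * u i - ∑ j ∈ univ.erase i, a i j * u j)
    (hh : 0 ≤ h) (hhd : ∀ i, h * d i ≤ 1) :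
    ‖u⁻¹ * x + h • (u⁻¹ * cooperativeField d a x)‖ ≤ (1 - h * c) * ‖u⁻¹ * x‖ := by
  set N := ‖u⁻¹ * x‖
  have hx : ∀ j, |x j| ≤ u j * N := fun j => by
    have := norm_le_pi_norm (u⁻¹ * x) j
    rwa [Pi.mul_apply, Pi.inv_apply, Real.norm_eq_abs, abs_mul, abs_inv, abs_of_pos (hu j),
      inv_mul_le_iff₀ (hu j)] at this
  refine (pi_norm_le_iff_of_nonempty _).2 fun i => ?_
  have hsum : |∑ j ∈ univ.erase i, a i j * x j| ≤ (∑ j ∈ univ.erase i, a i j * u j) * N := by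
    rw [sum_mul]
    refine (abs_sum_le_sum_abs _ _).trans (sum_le_sum fun j hj => ?_)
    have haj := ha i j (ne_of_mem_erase hj)
    rw [abs_mul, abs_of_nonneg haj, mul_assoc]
    exact mul_le_mul_of_nonneg_left (hx j) haj
  have hi : |(1 - h * d i) * x i + h * ∑ j ∈ univ.erase i, a i j * x j| ≤ (1 - h * c) * N * u i :=
    calc _ ≤ (1 - h * d i) * |x i| + h * |∑ j ∈ univ.erase i, a i j * x j| := by
          refine (abs_add_le _ _).trans_eq ?_
          rw [abs_mul, abs_mul, abs_of_nonneg (sub_nonneg.2 (hhd i)), abs_of_nonneg hh]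
      _ ≤ (1 - h * d i) * (u i * N) + h * ((∑ j ∈ univ.erase i, a i j * u j) * N) := by
          gcongr
          · exact sub_nonneg.2 (hhd i)
          · exact hx i
      _ ≤ (1 - h * c) * N * u i := by
          nlinarith [mul_le_mul_of_nonneg_left (hc i) (mul_nonneg hh (norm_nonneg (u⁻¹ * x)))]
  have hcomp : (u⁻¹ * x + h • (u⁻¹ * cooperativeField d a x)) i
      = (u i)⁻¹ * ((1 - h * d i) * x i + h * ∑ j ∈ univ.erase i, a i j * x j) := by
    simp only [cooperativeField, Pi.add_apply, Pi.mul_apply, Pi.smul_apply, Pi.inv_apply,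
      smul_eq_mul]
    ring
  rw [hcomp, Real.norm_eq_abs, abs_mul, abs_inv, abs_of_pos (hu i), inv_mul_le_iff₀ (hu i)]
  linarith

noncomputable def decayRate [Nonempty ι] (d : ι → ℝ → ℝ) (a : ι → ι → ℝ → ℝ) (u : ι → ℝ)
    (t : ℝ) : ℝ :=
  univ.inf' univ_nonempty fun i => (d i t * u i - ∑ j ∈ univ.erase i, a i j t * u j) / u i

variable [Nonempty ι] {d : ι → ℝ → ℝ} {a : ι → ι → ℝ → ℝ} {u : ι → ℝ}

theorem decayRate_mul_le (hu : ∀ i, 0 < u i) (t : ℝ) (i : ι) :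
    decayRate d a u t * u i ≤ d i t * u i - ∑ j ∈ univ.erase i, a i j t * u j :=
  (le_div_iff₀ (hu i)).1 (inf'_le _ (mem_univ i))

theorem decayRate_nonneg (hu : ∀ i, 0 < u i) {t : ℝ}
    (h : ∀ i, ∑ j ∈ univ.erase i, a i j t * u j ≤ d i t * u i) : 0 ≤ decayRate d a u t :=
  le_inf' _ _ fun i _ => div_nonneg (sub_nonneg.2 (h i)) (hu i).le

theorem decayRate_pos (hu : ∀ i, 0 < u i) {t : ℝ}
    (h : ∀ i, ∑ j ∈ univ.erase i, a i j t * u j < d i t * u i) : 0 < decayRate d a u t :=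
  (lt_inf'_iff _).2 fun i _ => div_pos (sub_pos.2 (h i)) (hu i)

theorem continuous_decayRate (hd : ∀ i, Continuous (d i))
    (ha : ∀ i j, j ≠ i → Continuous (a i j)) : Continuous (decayRate d a u) :=
  Continuous.finset_inf'_apply _ fun i _ =>
    (((hd i).mul continuous_const).sub (continuous_finsetSum _ fun j hj =>
      (ha i j (ne_of_mem_erase hj)).mul continuous_const)).div_const _

theorem decayRate_periodic {ω : ℝ} (hd : ∀ i t, d i (t + ω) = d i t)
    (ha : ∀ i j t, j ≠ i → a i j (t + ω) = a i j t) : Function.Periodic (decayRate d a u) ω :=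
  fun t => inf'_congr _ rfl fun i _ => by
    rw [hd, sum_congr rfl fun j hj => by rw [ha i j t (ne_of_mem_erase hj)]]

theorem norm_inv_mul_le_exp_neg_integral_decayRate (hd : ∀ i, Continuous (d i))
    (ha : ∀ i j, j ≠ i → Continuous (a i j)) (ha0 : ∀ i j t, j ≠ i → 0 ≤ a i j t)
    (hu : ∀ i, 0 < u i) {s t : ℝ} (hst : s ≤ t) {x : ℝ → ι → ℝ} (hx : ContinuousOn x (Ici s))
    (hode : ∀ τ > s, HasDerivAt x (cooperativeField (fun i => d i τ) (fun i j => a i j τ) (x τ)) τ) :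
    ‖u⁻¹ * x t‖ ≤ ‖u⁻¹ * x s‖ * exp (-∫ τ in s..t, decayRate d a u τ) := by
  refine le_mul_exp_neg_integral_of_slope_lt (f := fun τ => ‖u⁻¹ * x τ‖) hst
    (continuousOn_const.mul (hx.mono Icc_subset_Ici_self)).norm (fun _ _ => norm_nonneg _)
    (continuous_decayRate hd ha) fun τ hτ r hr => ?_
  have hsmall : ∀ᶠ h in 𝓝[>] (0 : ℝ), 0 ≤ h ∧ ∀ i, h * d i τ ≤ 1 := by
    have hsmall_i : ∀ i, ∀ᶠ h in 𝓝 (0 : ℝ), h * d i τ < 1 := fun i =>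
      ((continuous_mul_const (d i τ)).tendsto' 0 0 (zero_mul _)).eventually (gt_mem_nhds one_pos)
    filter_upwards [self_mem_nhdsWithin, nhdsWithin_le_nhds (eventually_all.2 hsmall_i)]
      with h hpos hlt
    exact ⟨le_of_lt hpos, fun i => (hlt i).le⟩
  refine (eventually_slope_norm_lt_of_hasDerivAt ((hode τ hτ.1).const_mul u⁻¹)
    (hsmall.mono fun h ⟨hh, hhd⟩ => ?_) hr).frequently
  have := norm_add_smul_cooperativeField_le (fun i j hij => ha0 i j τ hij) hu
    (decayRate_mul_le hu τ) hh hhd (x := x τ)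
  linarith

theorem exists_exp_stable_cooperative {ω : ℝ} (hω : 0 < ω) (hd : ∀ i, Continuous (d i))
    (ha : ∀ i j, j ≠ i → Continuous (a i j)) (hdper : ∀ i t, d i (t + ω) = d i t)
    (haper : ∀ i j t, j ≠ i → a i j (t + ω) = a i j t) (ha0 : ∀ i j t, j ≠ i → 0 ≤ a i j t)
    (hu : ∀ i, 0 < u i) {t₀ : ℝ}
    (hdom : ∀ i t, ∑ j ∈ univ.erase i, a i j t * u j ≤ d i t * u i)
    (hdom₀ : ∀ i, ∑ j ∈ univ.erase i, a i j t₀ * u j < d i t₀ * u i) :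
    ∃ K ≥ (1 : ℝ), ∃ α > (0 : ℝ), ∀ s (x : ℝ → ι → ℝ), ContinuousOn x (Ici s) →
      (∀ τ > s, HasDerivAt x (cooperativeField (fun i => d i τ) (fun i j => a i j τ) (x τ)) τ) →
      ∀ t ≥ s, ‖x t‖ ≤ K * exp (-α * (t - s)) * ‖x s‖ := by
  set c := decayRate d a u
  have hc : Continuous c := continuous_decayRate hd ha
  have hper : Function.Periodic c ω := decayRate_periodic hdper haper
  have hI : 0 < ∫ τ in 0..ω, c τ := by
    rw [← zero_add ω, hper.intervalIntegral_add_eq 0 t₀]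
    exact intervalIntegral.integral_pos (by linarith) hc.continuousOn
      (fun τ _ => decayRate_nonneg hu (hdom · τ)) ⟨t₀, left_mem_Icc.2 (by linarith),
        decayRate_pos hu hdom₀⟩
  obtain ⟨C, hC⟩ := hper.exists_average_mul_sub_le_intervalIntegral hω hc.intervalIntegrable hI.le
  have hC0 : 0 ≤ C := by simpa using hC 0 0
  set α := (∫ τ in 0..ω, c τ) / ω
  refine ⟨max 1 (‖u‖ * ‖u⁻¹‖) * exp C, one_le_mul_of_one_le_of_one_le (le_max_left _ _)
    (one_le_exp hC0), α, div_pos hI hω, fun s x hx hode t hst => ?_⟩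
  have hx_eq : x t = u * (u⁻¹ * x t) := by
    ext i
    simp [(hu i).ne']
  calc ‖x t‖ = ‖u * (u⁻¹ * x t)‖ := congrArg norm hx_eq
    _ ≤ ‖u‖ * ‖u⁻¹ * x t‖ := norm_mul_le _ _
    _ ≤ ‖u‖ * (‖u⁻¹ * x s‖ * exp (-∫ τ in s..t, c τ)) := by
        gcongr
        exact norm_inv_mul_le_exp_neg_integral_decayRate hd ha ha0 hu hst hx hode
    _ ≤ ‖u‖ * (‖u⁻¹‖ * ‖x s‖ * exp (C + -α * (t - s))) := by
        gcongr
        · exact norm_mul_le _ _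
        · linarith [hC s t]
    _ = ‖u‖ * ‖u⁻¹‖ * exp C * exp (-α * (t - s)) * ‖x s‖ := by rw [exp_add]; ring
    _ ≤ max 1 (‖u‖ * ‖u⁻¹‖) * exp C * exp (-α * (t - s)) * ‖x s‖ := by
        gcongr
        exact le_max_right _ _

end Cooperative

theorem iSup_abs_eq_norm {ι : Type*} [Fintype ι] (x : ι → ℝ) : ⨆ i, |x i| = ‖x‖ :=
  le_antisymm (Real.iSup_le (norm_le_pi_norm x) (norm_nonneg x))
    ((pi_norm_le_iff_of_nonneg (Real.iSup_nonneg fun i => abs_nonneg (x i))).2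
      fun i => le_ciSup (Finite.bddAbove_range fun i => |x i|) i)

theorem stmt0_general
    (n : ℕ) (ω : ℝ) (hω : 0 < ω)
    (d : Fin n → ℝ → ℝ) (a : Fin n → Fin n → ℝ → ℝ)
    (hdcont : ∀ i, Continuous (d i))
    (hacont : ∀ i j, j ≠ i → Continuous (a i j))
    (hdper : ∀ i t, d i (t + ω) = d i t)
    (haper : ∀ i j t, j ≠ i → a i j (t + ω) = a i j t)
    (hanneg : ∀ i j t, j ≠ i → 0 ≤ a i j t)
    (u : Fin n → ℝ) (hu : ∀ i, 0 < u i) (t0 : ℝ)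
    (hH2 : ∀ i t, ∑ j ∈ Finset.univ.erase i, a i j t * u j ≤ d i t * u i)
    (hH2s : ∀ i, ∑ j ∈ Finset.univ.erase i, a i j t0 * u j < d i t0 * u i) :
    ∃ K ≥ (1 : ℝ), ∃ α > (0 : ℝ), ∀ s : ℝ, ∀ x : ℝ → Fin n → ℝ,
      (∀ i, ContinuousOn (fun t => x t i) (Set.Ici s)) →
      (∀ t > s, ∀ i, HasDerivAt (fun u' => x u' i)
          (-d i t * x t i + ∑ j ∈ Finset.univ.erase i, a i j t * x t j) t) →
      ∀ t ≥ s, (⨆ i, |x t i|) ≤ K * Real.exp (-α * (t - s)) * ⨆ i, |x s i| := by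
  rcases isEmpty_or_nonempty (Fin n) with _ | _
  · exact ⟨1, le_rfl, 1, one_pos, fun s x _ _ t _ => by simp⟩
  obtain ⟨K, hK, α, hα, hstable⟩ := exists_exp_stable_cooperative hω hdcont hacont hdper haper
    hanneg hu hH2 hH2s
  refine ⟨K, hK, α, hα, fun s x hx hode t hst => ?_⟩
  simp only [iSup_abs_eq_norm]
  exact hstable s x (continuousOn_pi.2 hx) (fun τ hτ => hasDerivAt_pi.2 (hode τ hτ)) t hst

/-- Exponential asymptotic stability of the cooperative periodic linear ODE
`x_i' = -d_i(t) x_i + ∑_{j≠i} a_{ij}(t) x_j` under (H0)-(H2). -/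
theorem stmt0
    (n : ℕ) (hn : 1 ≤ n) (ω : ℝ) (hω : 0 < ω)
    (d : Fin n → ℝ → ℝ) (a : Fin n → Fin n → ℝ → ℝ)
    (hdcont : ∀ i, Continuous (d i))
    (hacont : ∀ i j, j ≠ i → Continuous (a i j))
    (hdper : ∀ i t, d i (t + ω) = d i t)
    (haper : ∀ i j t, j ≠ i → a i j (t + ω) = a i j t)
    (hdpos : ∀ i t, 0 < d i t)
    (hanneg : ∀ i j t, j ≠ i → 0 ≤ a i j t)
    (u : Fin n → ℝ) (hu : ∀ i, 0 < u i) (t0 : ℝ)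
    (hH2 : ∀ i t, ∑ j ∈ Finset.univ.erase i, a i j t * u j ≤ d i t * u i)
    (hH2s : ∀ i, ∑ j ∈ Finset.univ.erase i, a i j t0 * u j < d i t0 * u i) :
    ∃ K ≥ (1 : ℝ), ∃ α > (0 : ℝ), ∀ s : ℝ, ∀ x : ℝ → Fin n → ℝ,
      (∀ i, ContinuousOn (fun t => x t i) (Set.Ici s)) →
      (∀ t > s, ∀ i, HasDerivAt (fun u' => x u' i)
          (-d i t * x t i + ∑ j ∈ Finset.univ.erase i, a i j t * x t j) t) →
      ∀ t ≥ s, (⨆ i, |x t i|) ≤ K * Real.exp (-α * (t - s)) * ⨆ i, |x s i| :=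
  stmt0_general n ω hω d a hdcont hacont hdper haper hanneg u hu t0 hH2 hH2s
end

section
/- Consider the delay differential system x_i'(t) = −d_i(t)x_i(t) + Σ_{j≠i} a_{ij}(t)x_j(t) + Σ_{k=1}^{m} β_{ik}(t) h_{ik}(t, x_i(t − τ_{ik}(t))), i = 1, …, n, under hypotheses (H0)–(H4). Then: (a) every solution x on [0, ∞) with initial condition φ ∈ C_0 satisfies x_i(t) > 0 for all t ≥ 0 and all i; and (b) the system is dissipative: there exists a constant L > 0, depending only on the coefficient functions and nonlinearities (not on φ), such that every solution x on [0, ∞) with initial condition φ ∈ C_0 satisfies limsup_{t→∞} x_i(t) ≤ L for all i = 1, …, n. -/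
/-!
Positivity: at the first time `T` at which some component vanishes, every delayed argument is
still nonnegative, so `x_i' ≥ -d_i x_i` on `(0, T)` and the integrating factor keeps `x_i(T) > 0`.

Dissipativity: let `V t = max_i x_i(t) / u_i` and let `N_i` bound the bounded forcing term. At an
index attaining the maximum the right-hand side is at most
`-(d_i u_i - ∑_{j≠i} a_{ij} u_j) V + N_i`, so by (H2) the right Dini derivative of `V` is at most
a constant `M`. By the strict inequality at `t₀`, continuity and periodicity, the slack of (H2) is
bounded below on windows `[p + kω, p + kω + ℓ]`, and there `V` decreases fast as long as it stays
above a level `K`. Hence over each period `V` either dips below `K` or drops by `Mω`, so that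
eventually `V ≤ K + 2Mω`.
-/

open Real Set Filter Topology

theorem eventually_slope_sup'_lt {ι : Type*} {s : Finset ι} (hs : s.Nonempty)
    {z : ι → ℝ → ℝ} {w : ι → ℝ} {x r : ℝ}
    (hz : ∀ i ∈ s, HasDerivWithinAt (z i) (w i) (Ioi x) x)
    (hw : ∀ i ∈ s, z i x = s.sup' hs (z · x) → w i < r) :
    ∀ᶠ y in 𝓝[>] x, slope (fun t => s.sup' hs (z · t)) x y < r := by
  have hV : ContinuousWithinAt (fun t => s.sup' hs (z · t)) (Ioi x) x :=
    ContinuousWithinAt.finset_sup'_apply hs fun i hi => (hz i hi).continuousWithinAt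
  have hbranch : ∀ᶠ y in 𝓝[>] x, ∀ i ∈ s,
      z i y < s.sup' hs (z · y) ∨ slope (z i) x y < r := by
    refine (Filter.eventually_all_finset s).2 fun i hi => ?_
    rcases (Finset.le_sup' (z · x) hi).lt_or_eq with hlt | heq
    · exact ((hz i hi).continuousWithinAt.tendsto.eventually_lt hV hlt).mono fun y hy => .inl hy
    · have hslope := (hasDerivWithinAt_iff_tendsto_slope' (lt_irrefl x)).1 (hz i hi)
      exact (hslope.eventually_lt_const (hw i hi heq)).mono fun y hy => .inr hy
  filter_upwards [hbranch, self_mem_nhdsWithin] with y hy hxy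
  obtain ⟨i, hi, hmax⟩ := Finset.exists_mem_eq_sup' hs (z · y)
  have hslope := (hy i hi).resolve_left hmax.symm.not_lt
  -- `z i` attains the maximum at `y` but not necessarily at `x`, so its chord lies above.
  refine lt_of_le_of_lt ?_ hslope
  rw [slope_def_field, slope_def_field, hmax]
  exact div_le_div_of_nonneg_right (by linarith [Finset.le_sup' (z · x) hi]) (sub_pos.2 hxy).le

theorem sup'_le_add_mul_sub {ι : Type*} {s : Finset ι} (hs : s.Nonempty)
    {z w : ι → ℝ → ℝ} {a b c : ℝ}
    (hz : ∀ i ∈ s, ContinuousOn (z i) (Icc a b))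
    (hw : ∀ i ∈ s, ∀ t ∈ Ico a b, HasDerivWithinAt (z i) (w i t) (Ioi t) t)
    (hc : ∀ t ∈ Ico a b, ∀ i ∈ s, z i t = s.sup' hs (z · t) → w i t ≤ c) :
    ∀ t ∈ Icc a b, s.sup' hs (z · t) ≤ s.sup' hs (z · a) + c * (t - a) := by
  refine image_le_of_liminf_slope_right_le_deriv_boundary (B' := fun _ => c)
    (ContinuousOn.finset_sup'_apply hs hz) (by simp) (by fun_prop) (fun t _ => ?_)
    fun t ht r hr => ?_
  · simpa using (((hasDerivWithinAt_id t (Ici t)).sub_const a).const_mul c).const_add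
      (s.sup' hs (z · a))
  · exact (eventually_slope_sup'_lt hs (fun i hi => hw i hi t ht)
      fun i hi hmax => (hc t ht i hi hmax).trans_lt hr).frequently

theorem pos_of_neg_mul_le_deriv {f f' g : ℝ → ℝ} {a b : ℝ} (hab : a ≤ b) (hg : Continuous g)
    (hf : ContinuousOn f (Icc a b)) (hf' : ∀ t ∈ Ioo a b, HasDerivAt f (f' t) t)
    (hbound : ∀ t ∈ Ioo a b, -g t * f t ≤ f' t) (ha : 0 < f a) : 0 < f b := by
  set G : ℝ → ℝ := fun t => ∫ s in a..t, g s
  have hG : ∀ t, HasDerivAt G (g t) t := fun t => hg.integral_hasStrictDerivAt a t |>.hasDerivAt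
  have hmono : MonotoneOn (fun t => f t * exp (G t)) (Icc a b) := by
    refine monotoneOn_of_hasDerivWithinAt_nonneg (convex_Icc a b)
      (f' := fun t => f' t * exp (G t) + f t * (exp (G t) * g t))
      (hf.mul (continuous_exp.comp (continuous_iff_continuousAt.2
        fun t => (hG t).continuousAt)).continuousOn) (fun t ht => ?_) fun t ht => ?_
    · rw [interior_Icc] at ht
      exact ((hf' t ht).mul (hG t).exp).hasDerivWithinAt
    · rw [interior_Icc] at ht
      have := hbound t ht
      have : 0 ≤ f' t + g t * f t := by linarith
      calc (0 : ℝ) ≤ (f' t + g t * f t) * exp (G t) := by positivity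
        _ = _ := by ring
  have := hmono (left_mem_Icc.2 hab) (right_mem_Icc.2 hab) hab
  simp only [G, intervalIntegral.integral_same, exp_zero, mul_one] at this
  exact pos_of_mul_pos_left (ha.trans_le this) (exp_pos _).le

theorem exists_first_nonpos {ι : Type*} [Finite ι] {x : ℝ → ι → ℝ}
    (hx : ∀ i, ContinuousOn (fun t => x t i) (Ici 0)) (h0 : ∀ i, 0 < x 0 i)
    (hneg : ∃ t ≥ 0, ∃ i, x t i ≤ 0) :
    ∃ T > 0, (∀ s ∈ Ico 0 T, ∀ i, 0 < x s i) ∧ ∃ i, x T i ≤ 0 := by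
  set A : Set ℝ := ⋃ i, Ici 0 ∩ (fun t => x t i) ⁻¹' Iic 0
  have hA : IsClosed A :=
    isClosed_iUnion_of_finite fun i =>
      (hx i).preimage_isClosed_of_isClosed isClosed_Ici isClosed_Iic
  have hAne : A.Nonempty := by
    obtain ⟨t, ht, i, hi⟩ := hneg
    exact ⟨t, mem_iUnion.2 ⟨i, ht, hi⟩⟩
  have hAbdd : BddBelow A := ⟨0, fun t ht => by obtain ⟨i, hi, -⟩ := mem_iUnion.1 ht; exact hi⟩
  obtain ⟨i, hT0, hTi⟩ := mem_iUnion.1 (hA.csInf_mem hAne hAbdd)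
  have hT : sInf A ≠ 0 := fun h => (h0 i).not_ge (h ▸ hTi)
  refine ⟨sInf A, lt_of_le_of_ne hT0 (Ne.symm hT), fun s hs j => ?_, i, hTi⟩
  by_contra! hsj
  exact hs.2.not_ge (csInf_le hAbdd (mem_iUnion.2 ⟨j, hs.1, hsj⟩))

theorem exists_forall_le_on_periodic_Icc {ι : Type*} [Finite ι] {F : ι → ℝ → ℝ} {ω t₀ : ℝ}
    (hω : 0 < ω) (hper : ∀ i, Function.Periodic (F i) ω) (hcont : ∀ i, Continuous (F i))
    (hpos : ∀ i, 0 < F i t₀) :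
    ∃ p > 0, ∃ ℓ ∈ Ioc 0 ω,
      ∀ k : ℕ, ∀ s ∈ Icc (p + k * ω) (p + k * ω + ℓ), ∀ i, F i t₀ / 2 ≤ F i s := by
  have hev : ∀ᶠ s in 𝓝[≥] t₀, ∀ i, F i t₀ / 2 ≤ F i s :=
    nhdsWithin_le_nhds <| eventually_all.2 fun i =>
      (hcont i).continuousAt.eventually_const_le (half_lt_self (hpos i))
  obtain ⟨v, hv, hsub⟩ := mem_nhdsGE_iff_exists_Icc_subset.1 hev
  obtain ⟨k₀, hk₀⟩ := exists_nat_gt (-t₀ / ω)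
  refine ⟨t₀ + k₀ * ω, by linarith [(div_lt_iff₀ hω).1 hk₀], min (v - t₀) ω,
    ⟨lt_min (sub_pos.2 hv) hω, min_le_right _ _⟩, fun k s hs i => ?_⟩
  rw [← ((hper i).nat_mul (k₀ + k)).sub_eq s]
  push_cast
  exact hsub ⟨by linarith [hs.1], by linarith [hs.2, min_le_left (v - t₀) ω]⟩ i

theorem eventually_le_of_le_max_sub {v : ℕ → ℝ} {δ C : ℝ} (hδ : 0 < δ)
    (hv : ∀ k, v (k + 1) ≤ max (v k - δ) C) : ∀ᶠ k in atTop, v k ≤ C := by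
  have hind : ∀ k : ℕ, v k ≤ max (v 0 - k * δ) C := by
    intro k
    induction k with
    | zero => simp
    | succ k ih =>
      refine (hv k).trans (max_le ?_ (le_max_right _ _))
      rcases le_max_iff.1 ih with h | h
      · exact le_max_of_le_left (by push_cast; linarith)
      · exact le_max_of_le_right (by linarith)
  obtain ⟨k₀, hk₀⟩ := exists_nat_gt ((v 0 - C) / δ)
  filter_upwards [eventually_ge_atTop k₀] with k hk
  have : v 0 - C < k * δ :=
    (div_lt_iff₀ hδ).1 (hk₀.trans_le (Nat.cast_le.2 hk))
  exact (hind k).trans (max_le (by linarith) le_rfl)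

theorem eventually_le_of_decay_on_periodic_windows {V : ℝ → ℝ} {p ω ℓ M K : ℝ} (hω : 0 < ω)
    (hM : 0 < M) (hℓ : ℓ ∈ Icc 0 ω)
    (hgrow : ∀ A B, p ≤ A → A ≤ B → V B ≤ V A + M * (B - A))
    (hdecay : ∀ k : ℕ, (∀ s ∈ Icc (p + k * ω) (p + k * ω + ℓ), K ≤ V s) →
      V (p + k * ω + ℓ) ≤ V (p + k * ω) - 2 * M * ω) :
    ∀ᶠ t in atTop, V t ≤ K + 2 * M * ω := by
  have hp : ∀ k : ℕ, p ≤ p + k * ω := fun k => le_add_of_nonneg_right (by positivity)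
  have hperiod : ∀ k : ℕ,
      V (p + (k + 1 : ℕ) * ω) ≤ max (V (p + k * ω) - M * ω) (K + M * ω) := by
    intro k
    rw [show p + ((k + 1 : ℕ) : ℝ) * ω = p + k * ω + ω by push_cast; ring]
    by_cases hdip : ∃ s ∈ Icc (p + k * ω) (p + k * ω + ℓ), V s < K
    · obtain ⟨s, hs, hVs⟩ := hdip
      have hgrow_s := hgrow s (p + k * ω + ω) (by linarith [hp k, hs.1]) (by linarith [hs.2, hℓ.2])
      have : M * (p + k * ω + ω - s) ≤ M * ω :=
        mul_le_mul_of_nonneg_left (by linarith [hs.1]) hM.le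
      exact le_max_of_le_right (by linarith)
    · push Not at hdip
      have hwindow := hdecay k hdip
      have hrest := hgrow (p + k * ω + ℓ) (p + k * ω + ω) (by linarith [hp k, hℓ.1])
        (by linarith [hℓ.2])
      have : 0 ≤ M * ℓ := mul_nonneg hM.le hℓ.1
      exact le_max_of_le_left (by linarith)
  obtain ⟨k₀, hk₀⟩ := eventually_atTop.1 <|
    eventually_le_of_le_max_sub (v := fun k => V (p + k * ω)) (mul_pos hM hω) hperiod
  filter_upwards [eventually_ge_atTop (p + k₀ * ω)] with t ht
  have htp : 0 ≤ t - p := by linarith [hp k₀]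
  set k := ⌊(t - p) / ω⌋₊
  have hk₀k : k₀ ≤ k := Nat.le_floor ((le_div_iff₀ hω).2 (by linarith))
  have hkt : k * ω ≤ t - p := (le_div_iff₀ hω).1 (Nat.floor_le (div_nonneg htp hω.le))
  have htk : t - p < (k + 1) * ω := (div_lt_iff₀ hω).1 (Nat.lt_floor_add_one _)
  have hgrow_t := hgrow (p + k * ω) t (hp k) (by linarith)
  have : M * (t - (p + k * ω)) ≤ M * ω := mul_le_mul_of_nonneg_left (by linarith) hM.le
  linarith [hk₀ k hk₀k]

noncomputable def maxRatio {ι : Type*} [Fintype ι] [Nonempty ι] (y u : ι → ℝ) : ℝ :=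
  Finset.univ.sup' Finset.univ_nonempty fun j => y j / u j

theorem le_mul_maxRatio {ι : Type*} [Fintype ι] [Nonempty ι] {y u : ι → ℝ} {j : ι}
    (hu : 0 < u j) : y j ≤ u j * maxRatio y u := by
  rw [← div_le_iff₀' hu]
  exact Finset.le_sup' (fun j => y j / u j) (Finset.mem_univ j)

theorem maxRatio_nonneg {ι : Type*} [Fintype ι] [Nonempty ι] {y u : ι → ℝ}
    (hy : ∀ j, 0 ≤ y j) (hu : ∀ j, 0 < u j) : 0 ≤ maxRatio y u :=
  (div_nonneg (hy (Classical.arbitrary ι)) (hu _).le).trans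
    (Finset.le_sup' (fun j => y j / u j) (Finset.mem_univ _))

section DelaySystem

open Finset

def delaySystemRhs {n m : ℕ} (d : Fin n → ℝ → ℝ) (a : Fin n → Fin n → ℝ → ℝ)
    (β : Fin n → Fin m → ℝ → ℝ) (τd : Fin n → Fin m → ℝ → ℝ) (h : Fin n → Fin m → ℝ → ℝ → ℝ)
    (x : ℝ → Fin n → ℝ) (t : ℝ) (i : Fin n) : ℝ :=
  -d i t * x t i + ∑ j ∈ univ.erase i, a i j t * x t j + ∑ k, β i k t * h i k t (x (t - τd i k t) i)

/-- A solution on `[0, ∞)` with initial condition in `C₀`. -/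
structure IsSolution {n m : ℕ} (d : Fin n → ℝ → ℝ) (a : Fin n → Fin n → ℝ → ℝ)
    (β : Fin n → Fin m → ℝ → ℝ) (τd : Fin n → Fin m → ℝ → ℝ) (h : Fin n → Fin m → ℝ → ℝ → ℝ)
    (τ : ℝ) (x : ℝ → Fin n → ℝ) : Prop where
  continuousOn : ∀ i, ContinuousOn (fun t => x t i) (Ici (-τ))
  initial_nonneg : ∀ i, ∀ θ ∈ Icc (-τ) 0, 0 ≤ x θ i
  initial_pos : ∀ i, 0 < x 0 i
  hasDerivAt : ∀ t > 0, ∀ i, HasDerivAt (fun s => x s i) (delaySystemRhs d a β τd h x t i) t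

/-- The slack in hypothesis (H2). -/
def dominanceMargin {n : ℕ} (d : Fin n → ℝ → ℝ) (a : Fin n → Fin n → ℝ → ℝ) (u : Fin n → ℝ)
    (i : Fin n) (t : ℝ) : ℝ :=
  d i t * u i - ∑ j ∈ univ.erase i, a i j t * u j

variable {n m : ℕ} {d : Fin n → ℝ → ℝ} {a : Fin n → Fin n → ℝ → ℝ}
  {β : Fin n → Fin m → ℝ → ℝ} {τd : Fin n → Fin m → ℝ → ℝ} {h : Fin n → Fin m → ℝ → ℝ → ℝ}
  {τ : ℝ} {x : ℝ → Fin n → ℝ}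

theorem neg_mul_le_delaySystemRhs (hanneg : ∀ i j t, j ≠ i → 0 ≤ a i j t)
    (hβnneg : ∀ i k t, 0 ≤ β i k t) (hhnneg : ∀ i k t y, 0 ≤ y → 0 ≤ h i k t y)
    {t : ℝ} {i : Fin n} (hx : ∀ j, 0 ≤ x t j) (hdelay : ∀ k, 0 ≤ x (t - τd i k t) i) :
    -d i t * x t i ≤ delaySystemRhs d a β τd h x t i := by
  have hcoupling : 0 ≤ ∑ j ∈ univ.erase i, a i j t * x t j :=
    sum_nonneg fun j hj => mul_nonneg (hanneg i j t (ne_of_mem_erase hj)) (hx j)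
  have hforcing : 0 ≤ ∑ k, β i k t * h i k t (x (t - τd i k t) i) :=
    sum_nonneg fun k _ => mul_nonneg (hβnneg i k t) (hhnneg i k t _ (hdelay k))
  unfold delaySystemRhs
  linarith

theorem delaySystemRhs_le (hanneg : ∀ i j t, j ≠ i → 0 ≤ a i j t) {u : Fin n → ℝ}
    {t v N : ℝ} {i : Fin n} (hle : ∀ j, x t j ≤ u j * v) (heq : x t i = u i * v)
    (hN : ∑ k, β i k t * h i k t (x (t - τd i k t) i) ≤ N) :
    delaySystemRhs d a β τd h x t i ≤ -dominanceMargin d a u i t * v + N := by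
  have hcoupling :
      ∑ j ∈ univ.erase i, a i j t * x t j ≤ (∑ j ∈ univ.erase i, a i j t * u j) * v := by
    rw [sum_mul]
    refine sum_le_sum fun j hj => ?_
    rw [mul_assoc]
    exact mul_le_mul_of_nonneg_left (hle j) (hanneg i j t (ne_of_mem_erase hj))
  unfold delaySystemRhs dominanceMargin
  rw [heq]
  linarith

theorem dominanceMargin_periodic {ω : ℝ} (hdper : ∀ i t, d i (t + ω) = d i t)
    (haper : ∀ i j t, a i j (t + ω) = a i j t) (u : Fin n → ℝ) (i : Fin n) :
    Function.Periodic (dominanceMargin d a u i) ω := fun t => by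
  simp only [dominanceMargin, hdper, haper]

theorem continuous_dominanceMargin (hdcont : ∀ i, Continuous (d i))
    (hacont : ∀ i j, j ≠ i → Continuous (a i j)) (u : Fin n → ℝ) (i : Fin n) :
    Continuous (dominanceMargin d a u i) :=
  ((hdcont i).mul continuous_const).sub <|
    continuous_finsetSum _ fun j hj => (hacont i j (ne_of_mem_erase hj)).mul continuous_const

theorem exists_forcing_bound {ω : ℝ} (hω : 0 < ω) (hβper : ∀ i k t, β i k (t + ω) = β i k t)
    (hβcont : ∀ i k, Continuous (β i k)) (hβnneg : ∀ i k t, 0 ≤ β i k t)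
    (hhbdd : ∀ i k, ∃ B, ∀ t y, 0 ≤ y → h i k t y ≤ B)
    (hhnneg : ∀ i k t y, 0 ≤ y → 0 ≤ h i k t y) :
    ∃ N : Fin n → ℝ,
      ∀ i t (y : Fin m → ℝ), (∀ k, 0 ≤ y k) → ∑ k, β i k t * h i k t (y k) ≤ N i := by
  have hβbdd : ∀ i k, ∃ C, ∀ t, β i k t ≤ C := fun i k => by
    obtain ⟨C, hC⟩ :=
      (Function.Periodic.isBounded_of_continuous (hβper i k) hω.ne' (hβcont i k)).bddAbove
    exact ⟨C, fun t => hC (mem_range_self t)⟩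
  choose Cβ hCβ using hβbdd
  choose Ch hCh using hhbdd
  refine ⟨fun i => ∑ k, Cβ i k * Ch i k, fun i t y hy => sum_le_sum fun k _ => ?_⟩
  exact mul_le_mul (hCβ i k t) (hCh i k t _ (hy k)) (hhnneg i k t _ (hy k))
    ((hβnneg i k t).trans (hCβ i k t))

namespace IsSolution

theorem pos (hx : IsSolution d a β τd h τ x) (hτ0 : 0 ≤ τ) (hτle : ∀ i k t, τd i k t ≤ τ)
    (hτnneg : ∀ i k t, 0 ≤ τd i k t) (hdcont : ∀ i, Continuous (d i))
    (hanneg : ∀ i j t, j ≠ i → 0 ≤ a i j t) (hβnneg : ∀ i k t, 0 ≤ β i k t)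
    (hhnneg : ∀ i k t y, 0 ≤ y → 0 ≤ h i k t y) :
    ∀ t ≥ 0, ∀ i, 0 < x t i := by
  have hcont : ∀ i, ContinuousOn (fun t => x t i) (Ici 0) := fun i =>
    (hx.continuousOn i).mono (Ici_subset_Ici.2 (by linarith))
  by_contra! hneg
  obtain ⟨T, hT, hbefore, i, hTi⟩ := exists_first_nonpos hcont hx.initial_pos hneg
  have hnonneg : ∀ s ∈ Ico (-τ) T, ∀ j, 0 ≤ x s j := fun s hs j =>
    (le_or_gt s 0).elim (fun hs0 => hx.initial_nonneg j s ⟨hs.1, hs0⟩)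
      fun hs0 => (hbefore s ⟨hs0.le, hs.2⟩ j).le
  refine hTi.not_gt (pos_of_neg_mul_le_deriv hT.le (hdcont i)
    ((hcont i).mono Icc_subset_Ici_self) (fun t ht => hx.hasDerivAt t ht.1 i)
    (fun t ht => neg_mul_le_delaySystemRhs hanneg hβnneg hhnneg
      (hnonneg t ⟨by linarith [ht.1], ht.2⟩)
      fun k => hnonneg _ ⟨by linarith [hτle i k t, ht.1], by linarith [hτnneg i k t, ht.2]⟩ i)
    (hx.initial_pos i))

theorem nonneg (hx : IsSolution d a β τd h τ x) (hτ0 : 0 ≤ τ) (hτle : ∀ i k t, τd i k t ≤ τ)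
    (hτnneg : ∀ i k t, 0 ≤ τd i k t) (hdcont : ∀ i, Continuous (d i))
    (hanneg : ∀ i j t, j ≠ i → 0 ≤ a i j t) (hβnneg : ∀ i k t, 0 ≤ β i k t)
    (hhnneg : ∀ i k t y, 0 ≤ y → 0 ≤ h i k t y) :
    ∀ t ≥ -τ, ∀ i, 0 ≤ x t i := fun t ht i =>
  (le_or_gt t 0).elim (fun ht0 => hx.initial_nonneg i t ⟨ht, ht0⟩)
    fun ht0 => (hx.pos hτ0 hτle hτnneg hdcont hanneg hβnneg hhnneg t ht0.le i).le

variable [NeZero n]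

theorem maxRatio_le_add_mul (hx : IsSolution d a β τd h τ x) (hτ0 : 0 ≤ τ)
    (hanneg : ∀ i j t, j ≠ i → 0 ≤ a i j t) {u : Fin n → ℝ} (hu : ∀ i, 0 < u i)
    {N : Fin n → ℝ} (hN : ∀ t > 0, ∀ i, ∑ k, β i k t * h i k t (x (t - τd i k t) i) ≤ N i)
    {A B c : ℝ} (hA : 0 < A) (hAB : A ≤ B)
    (hc : ∀ t ∈ Ico A B, ∀ i, -dominanceMargin d a u i t * maxRatio (x t) u + N i ≤ c * u i) :
    maxRatio (x B) u ≤ maxRatio (x A) u + c * (B - A) := by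
  refine sup'_le_add_mul_sub (s := univ) (z := fun j t => x t j / u j)
    (w := fun j t => delaySystemRhs d a β τd h x t j / u j) univ_nonempty
    (fun j _ => ((hx.continuousOn j).mono fun t ht => (by linarith [ht.1] : -τ ≤ t)).div_const _)
    (fun j _ t ht => ((hx.hasDerivAt t (hA.trans_le ht.1) j).div_const (u j)).hasDerivWithinAt)
    (fun t ht j _ hmax => ?_) B ⟨hAB, le_rfl⟩
  have heq : x t j = u j * maxRatio (x t) u := by
    rw [mul_comm, ← div_eq_iff (hu j).ne']; exact hmax
  rw [div_le_iff₀ (hu j)]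
  exact (delaySystemRhs_le hanneg (fun j => le_mul_maxRatio (hu j)) heq
    (hN t (hA.trans_le ht.1) j)).trans (hc t ht j)

theorem maxRatio_le_add_mul_of_le (hx : IsSolution d a β τd h τ x) (hτ0 : 0 ≤ τ)
    (hanneg : ∀ i j t, j ≠ i → 0 ≤ a i j t) {u : Fin n → ℝ} (hu : ∀ i, 0 < u i)
    {N : Fin n → ℝ} (hN : ∀ t > 0, ∀ i, ∑ k, β i k t * h i k t (x (t - τd i k t) i) ≤ N i)
    (hV : ∀ t > 0, 0 ≤ maxRatio (x t) u) (hmargin : ∀ i t, 0 ≤ dominanceMargin d a u i t)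
    {M : ℝ} (hM : ∀ i, N i ≤ M * u i) {A B : ℝ} (hA : 0 < A) (hAB : A ≤ B) :
    maxRatio (x B) u ≤ maxRatio (x A) u + M * (B - A) :=
  hx.maxRatio_le_add_mul hτ0 hanneg hu hN hA hAB fun t ht i => by
    have := mul_nonneg (hmargin i t) (hV t (hA.trans_le ht.1))
    linarith [hM i]

theorem maxRatio_le_sub_mul_of_le (hx : IsSolution d a β τd h τ x) (hτ0 : 0 ≤ τ)
    (hanneg : ∀ i j t, j ≠ i → 0 ≤ a i j t) {u : Fin n → ℝ} (hu : ∀ i, 0 < u i)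
    {N : Fin n → ℝ} (hN : ∀ t > 0, ∀ i, ∑ k, β i k t * h i k t (x (t - τd i k t) i) ≤ N i)
    (hV : ∀ t > 0, 0 ≤ maxRatio (x t) u) {κ : Fin n → ℝ} (hκ : ∀ i, 0 ≤ κ i) {K q : ℝ}
    (hKq : ∀ i, N i + q * u i ≤ κ i * K) {A B : ℝ} (hA : 0 < A) (hAB : A ≤ B)
    (hmargin : ∀ t ∈ Ico A B, ∀ i, κ i ≤ dominanceMargin d a u i t)
    (hK : ∀ t ∈ Ico A B, K ≤ maxRatio (x t) u) :
    maxRatio (x B) u ≤ maxRatio (x A) u - q * (B - A) := by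
  have := hx.maxRatio_le_add_mul hτ0 hanneg hu hN hA hAB (c := -q) fun t ht i => by
    have h1 := mul_le_mul_of_nonneg_right (hmargin t ht i) (hV t (hA.trans_le ht.1))
    have h2 := mul_le_mul_of_nonneg_left (hK t ht) (hκ i)
    linarith [hKq i]
  linarith

theorem eventually_maxRatio_le (hx : IsSolution d a β τd h τ x) (hτ0 : 0 ≤ τ)
    (hanneg : ∀ i j t, j ≠ i → 0 ≤ a i j t) {u : Fin n → ℝ} (hu : ∀ i, 0 < u i)
    {N : Fin n → ℝ} (hN : ∀ t > 0, ∀ i, ∑ k, β i k t * h i k t (x (t - τd i k t) i) ≤ N i)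
    (hV : ∀ t > 0, 0 ≤ maxRatio (x t) u) (hmargin : ∀ i t, 0 ≤ dominanceMargin d a u i t)
    {ω p ℓ M K : ℝ} {κ : Fin n → ℝ} (hω : 0 < ω) (hp : 0 < p) (hℓ : ℓ ∈ Ioc 0 ω)
    (hwindow : ∀ k : ℕ, ∀ s ∈ Icc (p + k * ω) (p + k * ω + ℓ), ∀ i,
      κ i ≤ dominanceMargin d a u i s)
    (hκ : ∀ i, 0 ≤ κ i) (hM : 0 < M) (hNM : ∀ i, N i ≤ M * u i)
    (hNK : ∀ i, N i + 2 * M * ω / ℓ * u i ≤ κ i * K) :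
    ∀ᶠ t in atTop, maxRatio (x t) u ≤ K + 2 * M * ω := by
  refine eventually_le_of_decay_on_periodic_windows (V := fun t => maxRatio (x t) u)
    (p := p) hω hM ⟨hℓ.1.le, hℓ.2⟩ (fun A B hA hAB => hx.maxRatio_le_add_mul_of_le hτ0 hanneg
      hu hN hV hmargin hNM (hp.trans_le hA) hAB) fun k hK => ?_
  have hdecay := hx.maxRatio_le_sub_mul_of_le hτ0 hanneg hu hN hV hκ hNK (by positivity)
    (le_add_of_nonneg_right hℓ.1.le) (fun t ht => hwindow k t (Ico_subset_Icc_self ht))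
    fun t ht => hK t (Ico_subset_Icc_self ht)
  have : 2 * M * ω / ℓ * ℓ = 2 * M * ω := div_mul_cancel₀ _ hℓ.1.ne'
  linarith

theorem exists_limsup_le {ω t₀ : ℝ} (hω : 0 < ω)
    (hdper : ∀ i t, d i (t + ω) = d i t) (haper : ∀ i j t, a i j (t + ω) = a i j t)
    (hβper : ∀ i k t, β i k (t + ω) = β i k t) (hdcont : ∀ i, Continuous (d i))
    (hacont : ∀ i j, j ≠ i → Continuous (a i j)) (hanneg : ∀ i j t, j ≠ i → 0 ≤ a i j t)
    {u : Fin n → ℝ} (hu : ∀ i, 0 < u i) (hmargin : ∀ i t, 0 ≤ dominanceMargin d a u i t)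
    (hmargin₀ : ∀ i, 0 < dominanceMargin d a u i t₀)
    (hβcont : ∀ i k, Continuous (β i k)) (hβnneg : ∀ i k t, 0 ≤ β i k t)
    (hhbdd : ∀ i k, ∃ B, ∀ t y, 0 ≤ y → h i k t y ≤ B)
    (hhnneg : ∀ i k t y, 0 ≤ y → 0 ≤ h i k t y)
    (hτ0 : 0 ≤ τ) (hτle : ∀ i k t, τd i k t ≤ τ) (hτnneg : ∀ i k t, 0 ≤ τd i k t) :
    ∃ L > 0, ∀ x, IsSolution d a β τd h τ x → ∀ i, limsup (fun t => x t i) atTop ≤ L := by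
  obtain ⟨N, hN⟩ := exists_forcing_bound hω hβper hβcont hβnneg hhbdd hhnneg
  obtain ⟨p, hp, ℓ, hℓ, hwindow⟩ := exists_forall_le_on_periodic_Icc hω
    (dominanceMargin_periodic hdper haper u) (continuous_dominanceMargin hdcont hacont u) hmargin₀
  have hκ : ∀ i, 0 < dominanceMargin d a u i t₀ / 2 := fun i => half_pos (hmargin₀ i)
  obtain ⟨M₀, hM₀⟩ := Finite.exists_le fun i => N i / u i
  set M := max M₀ 1
  obtain ⟨K₀, hK₀⟩ := Finite.exists_le fun i =>
    (N i + 2 * M * ω / ℓ * u i) / (dominanceMargin d a u i t₀ / 2)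
  set K := max K₀ 0
  obtain ⟨U, hU⟩ := Finite.exists_le u
  refine ⟨U * (K + 2 * M * ω), mul_pos ((hu 0).trans_le (hU 0)) (by positivity),
    fun x hx i => ?_⟩
  have hnonneg := hx.nonneg hτ0 hτle hτnneg hdcont hanneg hβnneg hhnneg
  have hV : ∀ t > 0, 0 ≤ maxRatio (x t) u := fun t ht =>
    maxRatio_nonneg (hnonneg t (by linarith)) hu
  have hbound := hx.eventually_maxRatio_le (K := K) hτ0 hanneg hu
    (fun t ht i => hN i t _ fun k => hnonneg _ (by linarith [hτle i k t]) i) hV hmargin hω hp hℓ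
    hwindow (fun i => (hκ i).le) (lt_max_of_lt_right one_pos)
    (fun i => (div_le_iff₀ (hu i)).1 ((hM₀ i).trans (le_max_left _ _)))
    fun i => ((div_le_iff₀ (hκ i)).1 ((hK₀ i).trans (le_max_left _ _))).trans_eq (mul_comm _ _)
  refine limsup_le_of_le (isCoboundedUnder_le_of_eventually_le atTop
    ((eventually_gt_atTop 0).mono fun t ht => hnonneg t (by linarith) i)) ?_
  filter_upwards [hbound, eventually_gt_atTop 0] with t hVt ht
  calc x t i ≤ u i * maxRatio (x t) u := le_mul_maxRatio (hu i)
    _ ≤ U * maxRatio (x t) u := mul_le_mul_of_nonneg_right (hU i) (hV t ht)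
    _ ≤ U * (K + 2 * M * ω) := mul_le_mul_of_nonneg_left hVt ((hu i).le.trans (hU i))

end IsSolution

end DelaySystem

theorem stmt2_general
    (n m : ℕ) (hn : 1 ≤ n) (ω : ℝ) (hω : 0 < ω)
    (d : Fin n → ℝ → ℝ) (a : Fin n → Fin n → ℝ → ℝ)
    (β : Fin n → Fin m → ℝ → ℝ) (τd : Fin n → Fin m → ℝ → ℝ)
    (h : Fin n → Fin m → ℝ → ℝ → ℝ)
    -- (H0) ω-periodicity in t
    (hdper : ∀ i t, d i (t + ω) = d i t)
    (haper : ∀ i j t, a i j (t + ω) = a i j t)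
    (hβper : ∀ i k t, β i k (t + ω) = β i k t)
    (hτper : ∀ i k t, τd i k (t + ω) = τd i k t)
    -- (H1)
    (hdcont : ∀ i, Continuous (d i))
    (hacont : ∀ i j, j ≠ i → Continuous (a i j))
    (hanneg : ∀ i j t, j ≠ i → 0 ≤ a i j t)
    -- (H2)
    (u : Fin n → ℝ) (hu : ∀ i, 0 < u i) (t0 : ℝ)
    (hH2 : ∀ i t, ∑ j ∈ Finset.univ.erase i, a i j t * u j ≤ d i t * u i)
    (hH2s : ∀ i, ∑ j ∈ Finset.univ.erase i, a i j t0 * u j < d i t0 * u i)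
    -- (H3)
    (hτnneg : ∀ i k t, 0 ≤ τd i k t)
    (hβcont : ∀ i k, Continuous (β i k)) (hβnneg : ∀ i k t, 0 ≤ β i k t)
    -- (H4)
    (hhbdd : ∀ i k, ∃ B, ∀ t x, 0 ≤ x → h i k t x ≤ B)
    (hhnneg : ∀ i k t x, 0 ≤ x → 0 ≤ h i k t x)
    -- τ is the maximal delay
    (τ : ℝ)
    (hτmax : IsGreatest {r : ℝ | ∃ i k, ∃ t ∈ Set.Icc 0 ω, τd i k t = r} τ) :
    -- (a) strict positivity of solutions with initial conditions in C₀
    (∀ x : ℝ → Fin n → ℝ,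
      (∀ i, ContinuousOn (fun t => x t i) (Set.Ici (-τ))) →
      (∀ i, ∀ θ ∈ Set.Icc (-τ) 0, 0 ≤ x θ i) →
      (∀ i, 0 < x 0 i) →
      (∀ t > (0 : ℝ), ∀ i, HasDerivAt (fun s => x s i)
          (-d i t * x t i + ∑ j ∈ Finset.univ.erase i, a i j t * x t j
            + ∑ k, β i k t * h i k t (x (t - τd i k t) i)) t) →
      ∀ t ≥ (0 : ℝ), ∀ i, 0 < x t i)
    ∧
    -- (b) dissipativeness: a uniform ultimate upper bound L
    (∃ L > (0 : ℝ), ∀ x : ℝ → Fin n → ℝ,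
      (∀ i, ContinuousOn (fun t => x t i) (Set.Ici (-τ))) →
      (∀ i, ∀ θ ∈ Set.Icc (-τ) 0, 0 ≤ x θ i) →
      (∀ i, 0 < x 0 i) →
      (∀ t > (0 : ℝ), ∀ i, HasDerivAt (fun s => x s i)
          (-d i t * x t i + ∑ j ∈ Finset.univ.erase i, a i j t * x t j
            + ∑ k, β i k t * h i k t (x (t - τd i k t) i)) t) →
      ∀ i, Filter.limsup (fun t => x t i) Filter.atTop ≤ L) := by
  have hτle : ∀ i k t, τd i k t ≤ τ := fun i k t => by
    obtain ⟨s, hs, hts⟩ := Function.Periodic.exists_mem_Ico₀ (hτper i k) hω t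
    exact hts ▸ hτmax.2 ⟨i, k, s, Ico_subset_Icc_self hs, rfl⟩
  have hτ0 : 0 ≤ τ := by
    obtain ⟨i, k, t, -, rfl⟩ := hτmax.1
    exact hτnneg i k t
  have : NeZero n := ⟨by omega⟩
  obtain ⟨L, hL, hlimsup⟩ := IsSolution.exists_limsup_le hω hdper haper hβper hdcont hacont
    hanneg hu (fun i t => sub_nonneg.2 (hH2 i t)) (fun i => sub_pos.2 (hH2s i)) hβcont hβnneg
    hhbdd hhnneg hτ0 hτle hτnneg
  exact ⟨fun x hcont h0 hpos0 hder => IsSolution.pos ⟨hcont, h0, hpos0, hder⟩ hτ0 hτle hτnneg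
      hdcont hanneg hβnneg hhnneg,
    L, hL, fun x hcont h0 hpos0 hder => hlimsup x ⟨hcont, h0, hpos0, hder⟩⟩

/-- Positivity and dissipativeness of the delay system
`x_i' = -d_i(t) x_i + ∑_{j≠i} a_{ij}(t) x_j + ∑_k β_{ik}(t) h_{ik}(t, x_i(t - τ_{ik}(t)))`
under hypotheses (H0)-(H4). -/
theorem stmt2
    (n m : ℕ) (hn : 1 ≤ n) (hm : 1 ≤ m) (ω : ℝ) (hω : 0 < ω)
    (d : Fin n → ℝ → ℝ) (a : Fin n → Fin n → ℝ → ℝ)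
    (β : Fin n → Fin m → ℝ → ℝ) (τd : Fin n → Fin m → ℝ → ℝ)
    (h : Fin n → Fin m → ℝ → ℝ → ℝ) (hminus : Fin n → ℝ → ℝ)
    -- (H0) ω-periodicity in t
    (hdper : ∀ i t, d i (t + ω) = d i t)
    (haper : ∀ i j t, a i j (t + ω) = a i j t)
    (hβper : ∀ i k t, β i k (t + ω) = β i k t)
    (hhper : ∀ i k t x, 0 ≤ x → h i k (t + ω) x = h i k t x)
    (hτper : ∀ i k t, τd i k (t + ω) = τd i k t)
    -- (H1)
    (hdcont : ∀ i, Continuous (d i))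
    (hacont : ∀ i j, j ≠ i → Continuous (a i j))
    (hdpos : ∀ i t, 0 < d i t)
    (hanneg : ∀ i j t, j ≠ i → 0 ≤ a i j t)
    -- (H2)
    (u : Fin n → ℝ) (hu : ∀ i, 0 < u i) (t0 : ℝ)
    (hH2 : ∀ i t, ∑ j ∈ Finset.univ.erase i, a i j t * u j ≤ d i t * u i)
    (hH2s : ∀ i, ∑ j ∈ Finset.univ.erase i, a i j t0 * u j < d i t0 * u i)
    -- (H3)
    (hτcont : ∀ i k, Continuous (τd i k)) (hτnneg : ∀ i k t, 0 ≤ τd i k t)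
    (hβcont : ∀ i k, Continuous (β i k)) (hβnneg : ∀ i k t, 0 ≤ β i k t)
    (hβpos : ∀ i t, 0 < ∑ k, β i k t)
    -- (H4)
    (hhbdd : ∀ i k, ∃ B, ∀ t x, 0 ≤ x → h i k t x ≤ B)
    (hhnneg : ∀ i k t x, 0 ≤ x → 0 ≤ h i k t x)
    (hhcont : ∀ i k, ContinuousOn (fun p : ℝ × ℝ => h i k p.1 p.2) {p : ℝ × ℝ | 0 ≤ p.2})
    (hhlip : ∀ i k t x, 0 ≤ x → ∃ ε > (0 : ℝ), ∃ L ≥ (0 : ℝ),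
        ∀ y ∈ Set.Icc (max 0 (x - ε)) (x + ε), ∀ z ∈ Set.Icc (max 0 (x - ε)) (x + ε),
          |h i k t y - h i k t z| ≤ L * |y - z|)
    (hh0 : ∀ i k t, h i k t 0 = 0)
    (hhge : ∀ i k t x, 0 ≤ x → hminus i x ≤ h i k t x)
    (hmcont : ∀ i, ContinuousOn (hminus i) (Set.Ici 0))
    (hmnneg : ∀ i x, 0 ≤ x → 0 ≤ hminus i x)
    (hm0 : ∀ i, hminus i 0 = 0)
    (hmpos : ∀ i x, 0 < x → 0 < hminus i x)
    (hmC1 : ∀ i, ∃ ε > (0 : ℝ), ∃ g : ℝ → ℝ, ContinuousOn g (Set.Icc 0 ε) ∧ g 0 = 1 ∧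
        ∀ x ∈ Set.Icc 0 ε, HasDerivWithinAt (hminus i) (g x) (Set.Icc 0 ε) x)
    -- τ is the maximal delay
    (τ : ℝ)
    (hτmax : IsGreatest {r : ℝ | ∃ i k, ∃ t ∈ Set.Icc 0 ω, τd i k t = r} τ) :
    -- (a) strict positivity of solutions with initial conditions in C₀
    (∀ x : ℝ → Fin n → ℝ,
      (∀ i, ContinuousOn (fun t => x t i) (Set.Ici (-τ))) →
      (∀ i, ∀ θ ∈ Set.Icc (-τ) 0, 0 ≤ x θ i) →
      (∀ i, 0 < x 0 i) →
      (∀ t > (0 : ℝ), ∀ i, HasDerivAt (fun s => x s i)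
          (-d i t * x t i + ∑ j ∈ Finset.univ.erase i, a i j t * x t j
            + ∑ k, β i k t * h i k t (x (t - τd i k t) i)) t) →
      ∀ t ≥ (0 : ℝ), ∀ i, 0 < x t i)
    ∧
    -- (b) dissipativeness: a uniform ultimate upper bound L
    (∃ L > (0 : ℝ), ∀ x : ℝ → Fin n → ℝ,
      (∀ i, ContinuousOn (fun t => x t i) (Set.Ici (-τ))) →
      (∀ i, ∀ θ ∈ Set.Icc (-τ) 0, 0 ≤ x θ i) →
      (∀ i, 0 < x 0 i) →
      (∀ t > (0 : ℝ), ∀ i, HasDerivAt (fun s => x s i)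
          (-d i t * x t i + ∑ j ∈ Finset.univ.erase i, a i j t * x t j
            + ∑ k, β i k t * h i k t (x (t - τd i k t) i)) t) →
      ∀ i, Filter.limsup (fun t => x t i) Filter.atTop ≤ L) :=
  stmt2_general n m hn ω hω d a β τd h hdper haper hβper hτper hdcont hacont hanneg u hu t0 hH2 hH2s
    hτnneg hβcont hβnneg hhbdd hhnneg τ hτmax
end

section
/- Let n, m ≥ 1 and τ > 0. Let d_i, a_{ij} (j ≠ i), β_{ik}, τ_{ik} : ℝ → ℝ be continuous with d_i(t) > 0, a_{ij}(t) ≥ 0, β_{ik}(t) ≥ 0 and 0 ≤ τ_{ik}(t) ≤ τ for all t. Suppose there exist constants α_i > 1 such that α_i^{−1} Σ_{k=1}^{m} β_{ik}(t) − d_i(t) + Σ_{j≠i} a_{ij}(t) > 0 for all t ∈ ℝ and all i. Let m₀ > 0 and let H_i : [0, ∞) → [0, ∞) be nondecreasing functions with H_i(x) ≥ α_i^{−1} x for all x ∈ [0, m₀]. Let T ∈ ℝ and let x : [T, ∞) → [0, ∞)ⁿ be continuous, differentiable on (T + τ, ∞), and satisfy x_i'(t) = −d_i(t)x_i(t) +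 Σ_{j≠i} a_{ij}(t)x_j(t) + Σ_{k=1}^{m} β_{ik}(t) H_i(x_i(t − τ_{ik}(t))) for all t > T + τ and all i. If x_j(t) ≥ m₀ for all j = 1, …, n and all t ∈ [T, T + τ], then x_j(t) ≥ m₀ for all j = 1, …, n and all t ≥ T. -/
open Real Set

/-- Forward invariance of the region `x_i ≥ m₀` for the auxiliary cooperative delay system:
once all components stay above `m₀` on a window of length `τ`, they stay above `m₀` forever. -/
theorem stmt4
    (n m : ℕ) (hn : 1 ≤ n) (hm : 1 ≤ m) (τ : ℝ) (hτ : 0 < τ)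
    (d : Fin n → ℝ → ℝ) (a : Fin n → Fin n → ℝ → ℝ)
    (β : Fin n → Fin m → ℝ → ℝ) (τd : Fin n → Fin m → ℝ → ℝ)
    (hdcont : ∀ i, Continuous (d i))
    (hacont : ∀ i j, j ≠ i → Continuous (a i j))
    (hβcont : ∀ i k, Continuous (β i k))
    (hτcont : ∀ i k, Continuous (τd i k))
    (hdpos : ∀ i t, 0 < d i t)
    (hanneg : ∀ i j t, j ≠ i → 0 ≤ a i j t)
    (hβnneg : ∀ i k t, 0 ≤ β i k t)
    (hτrange : ∀ i k t, τd i k t ∈ Set.Icc 0 τ)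
    (α : Fin n → ℝ) (hα : ∀ i, 1 < α i)
    (hcond : ∀ i t, 0 < (α i)⁻¹ * (∑ k, β i k t) - d i t
        + ∑ j ∈ Finset.univ.erase i, a i j t)
    (m₀ : ℝ) (hm₀ : 0 < m₀)
    (H : Fin n → ℝ → ℝ)
    (hHnneg : ∀ i x, 0 ≤ x → 0 ≤ H i x)
    (hHmono : ∀ i, MonotoneOn (H i) (Set.Ici 0))
    (hHlow : ∀ i, ∀ x ∈ Set.Icc 0 m₀, (α i)⁻¹ * x ≤ H i x)
    (T : ℝ) (x : ℝ → Fin n → ℝ)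
    (hxcont : ∀ i, ContinuousOn (fun t => x t i) (Set.Ici T))
    (hxnneg : ∀ i, ∀ t ≥ T, 0 ≤ x t i)
    (hxode : ∀ t > T + τ, ∀ i, HasDerivAt (fun s => x s i)
        (-d i t * x t i + ∑ j ∈ Finset.univ.erase i, a i j t * x t j
          + ∑ k, β i k t * H i (x (t - τd i k t) i)) t)
    (hinit : ∀ j, ∀ t ∈ Set.Icc T (T + τ), m₀ ≤ x t j) :
    ∀ j, ∀ t ≥ T, m₀ ≤ x t j := by
  -- It suffices to show the bound for every level `c` strictly below `m₀`.
  suffices h : ∀ c, 0 < c → c < m₀ → ∀ j, ∀ t ≥ T, c ≤ x t j by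
    intro j t ht
    by_contra hlt
    push_neg at hlt
    have hx0 : 0 ≤ x t j := hxnneg j t ht
    obtain ⟨c, hc1, hc2⟩ := exists_between hlt
    have := h c (lt_of_le_of_lt hx0 hc1) hc2 j t ht
    linarith
  intro c hc hcm
  by_contra hbad
  push_neg at hbad
  obtain ⟨j₀, t₀, ht₀, hxt₀⟩ := hbad
  set B : Set ℝ := {t | T ≤ t ∧ ∃ i, x t i < c} with hBdef
  have hBne : B.Nonempty := ⟨t₀, ht₀, j₀, hxt₀⟩
  have hBlb : ∀ t ∈ B, T + τ < t := by
    rintro t ⟨htT, i, hti⟩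
    by_contra hle
    push_neg at hle
    have := hinit i t ⟨htT, hle⟩
    linarith
  have hBbdd : BddBelow B := ⟨T + τ, fun t ht => (hBlb t ht).le⟩
  set t₁ := sInf B with ht₁def
  have ht₁ge : T + τ ≤ t₁ := le_csInf hBne (fun t ht => (hBlb t ht).le)
  have ht₁T : T < t₁ := by linarith
  -- strictly before `t₁` all components are ≥ c
  have hbefore : ∀ s ∈ Set.Ico T t₁, ∀ i, c ≤ x s i := by
    rintro s ⟨hsT, hst⟩ i
    by_contra h'
    push_neg at h'
    exact absurd (csInf_le hBbdd ⟨hsT, i, h'⟩) (not_le.mpr hst)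
  -- at `t₁` all components are ≥ c (by continuity from the left)
  have hat : ∀ i, c ≤ x t₁ i := by
    intro i
    have hcw : ContinuousWithinAt (fun s => x s i) (Set.Ico T t₁) t₁ :=
      ((hxcont i) t₁ ht₁T.le).mono Set.Ico_subset_Ici_self
    have hne : (nhdsWithin t₁ (Set.Ico T t₁)).NeBot := by
      apply mem_closure_iff_nhdsWithin_neBot.mp
      rw [closure_Ico ht₁T.ne]
      exact ⟨ht₁T.le, le_rfl⟩
    exact ge_of_tendsto hcw
      (Filter.eventually_of_mem self_mem_nhdsWithin fun s hs => hbefore s hs i)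
  -- at points `s ≤ t₁` all components are ≥ c
  have hupto : ∀ s, T ≤ s → s ≤ t₁ → ∀ i, c ≤ x s i := by
    intro s hsT hst i
    rcases hst.lt_or_eq with h' | h'
    · exact hbefore s ⟨hsT, h'⟩ i
    · rw [h']; exact hat i
  -- each component is eventually > c to the right of t₁
  have hmain : ∀ i, ∀ᶠ t in nhdsWithin t₁ (Set.Ioi t₁), c < x t i := by
    intro i
    rcases (hat i).lt_or_eq with hlt | heq
    · have hcw : ContinuousWithinAt (fun s => x s i) (Set.Ici T) t₁ :=
        (hxcont i) t₁ ht₁T.le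
      have h1 : ∀ᶠ t in nhdsWithin t₁ (Set.Ici T), c < x t i :=
        hcw (lt_mem_nhds hlt)
      exact h1.filter_mono (nhdsWithin_mono t₁ (fun t ht => le_trans ht₁T.le (le_of_lt ht)))
    · -- x t₁ i = c : use the ODE, the derivative at t₁ is positive
      have ht₁gt : T + τ < t₁ := by
        rcases ht₁ge.lt_or_eq with h' | h'
        · exact h'
        · exfalso
          have := hinit i t₁ ⟨by linarith, h'.symm.le⟩
          rw [← heq] at this
          linarith
      have hode := hxode t₁ ht₁gt i
      rw [← heq] at hode
      set D := -d i t₁ * c + ∑ j ∈ Finset.univ.erase i, a i j t₁ * x t₁ j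
          + ∑ k, β i k t₁ * H i (x (t₁ - τd i k t₁) i) with hDdef
      have hαpos : (0:ℝ) < α i := lt_trans one_pos (hα i)
      have hαinv : (0:ℝ) ≤ (α i)⁻¹ := inv_nonneg.mpr hαpos.le
      -- lower bound for the H-terms
      have hH : ∀ k, (α i)⁻¹ * c ≤ H i (x (t₁ - τd i k t₁) i) := by
        intro k
        have hτk := hτrange i k t₁
        set s := t₁ - τd i k t₁ with hsdef
        have hsT : T ≤ s := by
          have := hτk.2
          simp only [hsdef]
          linarith
        have hst : s ≤ t₁ := by
          have := hτk.1
          simp only [hsdef]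
          linarith
        have hxs : c ≤ x s i := hupto s hsT hst i
        have hxs0 : 0 ≤ x s i := hxnneg i s hsT
        rcases le_or_gt (x s i) m₀ with h' | h'
        · calc (α i)⁻¹ * c ≤ (α i)⁻¹ * x s i := by
                exact mul_le_mul_of_nonneg_left hxs hαinv
            _ ≤ H i (x s i) := hHlow i _ ⟨hxs0, h'⟩
        · calc (α i)⁻¹ * c ≤ (α i)⁻¹ * m₀ := mul_le_mul_of_nonneg_left hcm.le hαinv
            _ ≤ H i m₀ := hHlow i m₀ ⟨hm₀.le, le_rfl⟩
            _ ≤ H i (x s i) := hHmono i (Set.mem_Ici.mpr hm₀.le)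
                (Set.mem_Ici.mpr hxs0) h'.le
      have h1 : ∑ j ∈ Finset.univ.erase i, a i j t₁ * c
          ≤ ∑ j ∈ Finset.univ.erase i, a i j t₁ * x t₁ j :=
        Finset.sum_le_sum fun j hj =>
          mul_le_mul_of_nonneg_left (hat j) (hanneg i j t₁ (Finset.ne_of_mem_erase hj))
      have h2 : ∑ k, β i k t₁ * ((α i)⁻¹ * c)
          ≤ ∑ k, β i k t₁ * H i (x (t₁ - τd i k t₁) i) :=
        Finset.sum_le_sum fun k _ => mul_le_mul_of_nonneg_left (hH k) (hβnneg i k t₁)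
      have e1 : ∑ j ∈ Finset.univ.erase i, a i j t₁ * c
          = (∑ j ∈ Finset.univ.erase i, a i j t₁) * c := by
        rw [Finset.sum_mul]
      have e2 : ∑ k, β i k t₁ * ((α i)⁻¹ * c)
          = (∑ k, β i k t₁) * ((α i)⁻¹ * c) := by
        rw [Finset.sum_mul]
      have hkey := hcond i t₁
      have e3 : c * ((α i)⁻¹ * (∑ k, β i k t₁) - d i t₁
            + ∑ j ∈ Finset.univ.erase i, a i j t₁)
          = -d i t₁ * c + (∑ j ∈ Finset.univ.erase i, a i j t₁) * c
            + (∑ k, β i k t₁) * ((α i)⁻¹ * c) := by ring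
      have hDpos : 0 < D := by
        have hcp := mul_pos hc hkey
        rw [e3] at hcp
        rw [hDdef]
        linarith [h1, h2, e1, e2]
      -- positive derivative ⇒ strictly above c just to the right
      have hslope : Filter.Tendsto (slope (fun s => x s i) t₁)
          (nhdsWithin t₁ {t₁}ᶜ) (nhds D) := hasDerivAt_iff_tendsto_slope.mp hode
      have h4 : ∀ᶠ t in nhdsWithin t₁ {t₁}ᶜ, 0 < slope (fun s => x s i) t₁ t :=
        hslope (lt_mem_nhds hDpos)
      have h5 : ∀ᶠ t in nhdsWithin t₁ (Set.Ioi t₁), 0 < slope (fun s => x s i) t₁ t :=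
        h4.filter_mono (nhdsWithin_mono t₁ (fun t ht => ne_of_gt ht))
      have h6 : ∀ᶠ t in nhdsWithin t₁ (Set.Ioi t₁), t ∈ Set.Ioi t₁ :=
        Filter.eventually_of_mem self_mem_nhdsWithin fun t ht => ht
      filter_upwards [h5, h6] with t hslopet htgt
      rw [slope_def_field] at hslopet
      have hden : (0:ℝ) < t - t₁ := sub_pos.mpr htgt
      have hnum : 0 < x t i - x t₁ i := by
        rcases div_pos_iff.mp hslopet with ⟨h', _⟩ | ⟨_, h''⟩
        · exact h'
        · linarith
      rw [← heq] at hnum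
      linarith
  -- combine the finitely many components
  have hall : ∀ᶠ t in nhdsWithin t₁ (Set.Ioi t₁), ∀ i, c < x t i := by
    rw [Filter.eventually_all]
    exact hmain
  obtain ⟨u, hu, hsub⟩ := mem_nhdsGT_iff_exists_Ioc_subset.mp hall
  obtain ⟨t, htB, htu⟩ := exists_lt_of_csInf_lt hBne hu
  have ht₁t : t₁ ≤ t := csInf_le hBbdd htB
  obtain ⟨htT, i, hti⟩ := htB
  have htne : t₁ ≠ t := by
    intro h'
    rw [← h'] at hti
    exact absurd (hat i) (not_le.mpr hti)
  have : c < x t i := hsub ⟨lt_of_le_of_ne ht₁t htne, htu.le⟩ i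
  linarith
end

section
/- Let n, m ≥ 1 and let d_i > 0, a_{ij} ≥ 0 (j ≠ i, with a_{ii} := 0), β_{ik} ≥ 0 be real constants with β_i := Σ_{k=1}^{m} β_{ik} > 0 for each i. Let h_{ik} : [0, ∞) → [0, ∞) satisfy (H4*): h_{ik} is bounded, locally Lipschitz continuous on [0, ∞), continuously differentiable on a right neighborhood of 0, with h_{ik}(0) = 0, h_{ik}'(0) = 1, and h_{ik}(x) > 0 for x > 0, for all i, k. Assume: (i) there exists u ≫ 0 with d_i u_i > Σ_{j≠i} a_{ij} u_j for all i (i.e., D − A is a non-singular M-matrix, where D = diag(d_1, …, d_n) and A = [a_{ij}]); and (ii) there exists v ≫ 0 with (β_i − d_i)v_i + Σ_{j≠i} a_{ij} v_j > 0 for all i. Then there exists a point x* ∈ ℝⁿ with x*_i > 0 for all i such that −d_i x*_i + Σ_{j≠i} a_{ij} x*_j + Σ_{k=1}^{m} β_{ik} h_{ik}(x*_i) = 0 for every i = 1, …, n; that is, the autonomous delay system x_i'(t) = −d_i x_i(t) + Σ_{j≠i} a_{ij} x_j(t) + Σ_{k=1}^{m} β_{ik} h_{ik}(x_i(t − τ_{ik}(t)))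 has a positive equilibrium. -/
/-!
Along the ray `s • v` the right-hand side has slope
`((∑ k, β i k) - d i) * v i + ∑ j ≠ i, a i j * v j > 0` at `s = 0⁺` (each `h i k` has slope `1`
at `0`), so `ℓ = s • v` is a strict subsolution for small `s`; since the `h i k` are bounded, (i)
makes `M = R • u` a supersolution for large `R`. The system is cooperative, so sending `x` to the
vector of least zeros in `[ℓ i, M i]` of the `i`-th equation, with the other coordinates frozen at
`x`, is a monotone self-map of the order interval `[ℓ, M]`. Its Knaster–Tarski fixed point is a
positive equilibrium.
-/

open Set Filter Topology Finset Function

noncomputable def leastNonpos (f : ℝ → ℝ) (a b : ℝ) : ℝ := sInf {y ∈ Icc a b | f y ≤ 0}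

section LeastNonpos

variable {f : ℝ → ℝ} {a b : ℝ}

lemma isLeast_leastNonpos (hab : a ≤ b) (hf : ContinuousOn f (Icc a b)) (hb : f b ≤ 0) :
    IsLeast {y ∈ Icc a b | f y ≤ 0} (leastNonpos f a b) :=
  ⟨(hf.preimage_isClosed_of_isClosed isClosed_Icc isClosed_Iic).csInf_mem
      ⟨b, right_mem_Icc.2 hab, hb⟩ ⟨a, fun _ hy => hy.1.1⟩,
    fun _ hy => csInf_le ⟨a, fun _ hy => hy.1.1⟩ hy⟩

/-- If `f` had a negative value at the least point `r` where it is nonpositive, the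
intermediate value theorem on `[a, r]` would give an earlier zero. -/
lemma apply_leastNonpos_eq_zero (hab : a ≤ b) (hf : ContinuousOn f (Icc a b)) (ha : 0 ≤ f a)
    (hb : f b ≤ 0) : f (leastNonpos f a b) = 0 := by
  obtain ⟨⟨⟨har, hrb⟩, hr⟩, hleast⟩ := isLeast_leastNonpos hab hf hb
  refine le_antisymm hr (not_lt.1 fun hneg => ?_)
  obtain ⟨y, ⟨hay, hyr⟩, hy⟩ := intermediate_value_Icc' har
    (hf.mono (Icc_subset_Icc_right hrb)) ⟨hneg.le, ha⟩
  have hry : leastNonpos f a b ≤ y := hleast ⟨⟨hay, hyr.trans hrb⟩, hy.le⟩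
  exact hneg.ne (le_antisymm hyr hry ▸ hy)

end LeastNonpos

theorem MonotoneOn.exists_fixedPoint_of_mapsTo {α : Type*} [ConditionallyCompleteLattice α]
    {f : α → α} {a b : α} (hab : a ≤ b) (hf : MonotoneOn f (Icc a b))
    (hmaps : MapsTo f (Icc a b) (Icc a b)) : ∃ x ∈ Icc a b, f x = x := by
  have : Fact (a ≤ b) := ⟨hab⟩
  let g : Icc a b →o Icc a b := ⟨hmaps.restrict f _ _, fun x y hxy => hf x.2 y.2 hxy⟩
  exact ⟨g.lfp, g.lfp.2, congrArg Subtype.val g.map_lfp⟩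

theorem exists_zero_of_subsolution_le_supersolution {ι : Type*} [DecidableEq ι]
    (F : (ι → ℝ) → ι → ℝ) {ℓ M : ι → ℝ} (hℓM : ℓ ≤ M)
    (hcont : ∀ x ∈ Icc ℓ M, ∀ i, ContinuousOn (fun y => F (update x i y) i) (Icc (ℓ i) (M i)))
    (hmono : ∀ ⦃x y⦄, x ≤ y → ∀ i, x i = y i → F x i ≤ F y i)
    (hℓ : ∀ i, 0 ≤ F ℓ i) (hM : ∀ i, F M i ≤ 0) :
    ∃ x ∈ Icc ℓ M, F x = 0 := by
  let T : (ι → ℝ) → ι → ℝ := fun x i =>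
    leastNonpos (fun y => F (update x i y) i) (ℓ i) (M i)
  have hlow : ∀ x ∈ Icc ℓ M, ∀ i, 0 ≤ F (update x i (ℓ i)) i := fun x hx i =>
    (hℓ i).trans (hmono (le_update_iff.2 ⟨le_rfl, fun j _ => hx.1 j⟩) i (by simp))
  have hup : ∀ x ∈ Icc ℓ M, ∀ i, F (update x i (M i)) i ≤ 0 := fun x hx i =>
    (hmono (update_le_iff.2 ⟨le_rfl, fun j _ => hx.2 j⟩) i (by simp)).trans (hM i)
  have hleast : ∀ x ∈ Icc ℓ M, ∀ i,
      IsLeast {y ∈ Icc (ℓ i) (M i) | F (update x i y) i ≤ 0} (T x i) := fun x hx i =>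
    isLeast_leastNonpos (hℓM i) (hcont x hx i) (hup x hx i)
  have hzero : ∀ x ∈ Icc ℓ M, ∀ i, F (update x i (T x i)) i = 0 := fun x hx i =>
    apply_leastNonpos_eq_zero (hℓM i) (hcont x hx i) (hlow x hx i) (hup x hx i)
  have hmaps : MapsTo T (Icc ℓ M) (Icc ℓ M) := fun x hx =>
    ⟨fun i => (hleast x hx i).1.1.1, fun i => (hleast x hx i).1.1.2⟩
  have hTmono : MonotoneOn T (Icc ℓ M) := fun x hx x' hx' hxx' i =>
    (hleast x hx i).2 ⟨(hleast x' hx' i).1.1, (hmono (update_le_update_iff.2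
      ⟨le_rfl, fun j _ => hxx' j⟩) i (by simp)).trans (hzero x' hx' i).le⟩
  obtain ⟨x, hx, hfix⟩ := hTmono.exists_fixedPoint_of_mapsTo hℓM hmaps
  refine ⟨x, hx, funext fun i => ?_⟩
  simpa [hfix] using hzero x hx i

theorem HasDerivWithinAt.eventually_lt_nhdsGT {f : ℝ → ℝ} {f' x : ℝ}
    (hf : HasDerivWithinAt f f' (Ioi x) x) (hf' : 0 < f') : ∀ᶠ y in 𝓝[>] x, f x < f y := by
  have hslope := (hasDerivWithinAt_iff_tendsto_slope' (by simp)).1 hf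
  filter_upwards [hslope.eventually_const_lt hf', self_mem_nhdsWithin] with y hy hxy
  rw [slope_def_field, lt_div_iff₀ (sub_pos.2 hxy), zero_mul, sub_pos] at hy
  exact hy

theorem continuousAt_of_lipschitz_near {g : ℝ → ℝ} {x : ℝ} (hx : 0 < x)
    (hlip : ∃ ε > (0 : ℝ), ∃ L ≥ (0 : ℝ),
        ∀ y ∈ Icc (max 0 (x - ε)) (x + ε), ∀ z ∈ Icc (max 0 (x - ε)) (x + ε),
          |g y - g z| ≤ L * |y - z|) :
    ContinuousAt g x := by
  obtain ⟨ε, hε, L, hL, hlip⟩ := hlip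
  have hLip : LipschitzOnWith L.toNNReal g (Icc (max 0 (x - ε)) (x + ε)) :=
    LipschitzOnWith.of_dist_le_mul fun y hy z hz => by
      simpa [Real.dist_eq, Real.coe_toNNReal L hL] using hlip y hy z hz
  exact hLip.continuousOn.continuousAt (Icc_mem_nhds (max_lt hx (by linarith)) (by linarith))

theorem eventually_le_smul_atTop {ι : Type*} [Finite ι] {u : ι → ℝ} (hu : ∀ i, 0 < u i)
    (w : ι → ℝ) : ∀ᶠ R : ℝ in atTop, w ≤ R • u :=
  eventually_all.2 fun i => (eventually_ge_atTop (w i / u i)).mono fun R hR => by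
    simpa [div_le_iff₀ (hu i)] using hR

namespace DelaySystem

variable {ι κ : Type*} [Fintype ι] [DecidableEq ι] [Fintype κ]
  (d : ι → ℝ) (a : ι → ι → ℝ) (β : ι → κ → ℝ) (h : ι → κ → ℝ → ℝ)

/-- The right-hand side of the delay system along the constant history `x`. -/
def rhs (x : ι → ℝ) (i : ι) : ℝ :=
  -d i * x i + (∑ j ∈ univ.erase i, a i j * x j) + ∑ k, β i k * h i k (x i)

variable {d a β h}

theorem rhs_mono (ha : ∀ i j, j ≠ i → 0 ≤ a i j) ⦃x y : ι → ℝ⦄ (hxy : x ≤ y) (i : ι)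
    (hi : x i = y i) : rhs d a β h x i ≤ rhs d a β h y i := by
  have hsum : ∑ j ∈ univ.erase i, a i j * x j ≤ ∑ j ∈ univ.erase i, a i j * y j :=
    sum_le_sum fun j hj => mul_le_mul_of_nonneg_left (hxy j) (ha i j (ne_of_mem_erase hj))
  simp only [rhs, hi]
  linarith

theorem rhs_update_self (x : ι → ℝ) (i : ι) (y : ℝ) :
    rhs d a β h (update x i y) i =
      -d i * y + (∑ j ∈ univ.erase i, a i j * x j) + ∑ k, β i k * h i k y := by
  simp only [rhs, update_self]
  congr 2
  exact sum_congr rfl fun j hj => by rw [update_of_ne (ne_of_mem_erase hj)]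

theorem rhs_smul (c : ℝ) (w : ι → ℝ) (i : ι) :
    rhs d a β h (c • w) i =
      c * (-d i * w i + ∑ j ∈ univ.erase i, a i j * w j) + ∑ k, β i k * h i k (c * w i) := by
  simp only [rhs, Pi.smul_apply, smul_eq_mul, mul_add, mul_sum]
  congr 2
  · ring
  · exact sum_congr rfl fun j _ => by ring

theorem continuousOn_rhs_update {i : ι} (hcont : ∀ k y, 0 < y → ContinuousAt (h i k) y)
    (x : ι → ℝ) {p q : ℝ} (hp : 0 < p) :
    ContinuousOn (fun y => rhs d a β h (update x i y) i) (Icc p q) := by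
  simp only [rhs_update_self]
  intro y hy
  have hk := fun k => hcont k y (hp.trans_le hy.1)
  exact ContinuousAt.continuousWithinAt (by fun_prop)

theorem eventually_rhs_smul_pos {i : ι} {v : ι → ℝ} (hv : 0 < v i)
    (hderiv : ∀ k, HasDerivWithinAt (h i k) 1 (Ioi 0) 0) (h0 : ∀ k, h i k 0 = 0)
    (hMv : 0 < ((∑ k, β i k) - d i) * v i + ∑ j ∈ univ.erase i, a i j * v j) :
    ∀ᶠ s : ℝ in 𝓝[>] 0, 0 < rhs d a β h (s • v) i := by
  have hray : ∀ k, HasDerivWithinAt (fun s => h i k (s * v i)) (v i) (Ioi 0) 0 := fun k =>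
    ((hderiv k).comp_of_eq 0 ((hasDerivWithinAt_id _ _).mul_const (v i))
      (fun s hs => mul_pos hs hv) (by simp)).congr_deriv (by simp)
  have hψ := ((hasDerivWithinAt_id (0 : ℝ) (Ioi 0)).mul_const
    (-d i * v i + ∑ j ∈ univ.erase i, a i j * v j)).add
      (HasDerivWithinAt.sum (u := univ) fun k _ => (hray k).const_mul (β i k))
  have hslope : 0 < 1 * (-d i * v i + ∑ j ∈ univ.erase i, a i j * v j) +
      ∑ k, β i k * v i := by
    rw [← sum_mul]; linarith
  filter_upwards [hψ.eventually_lt_nhdsGT hslope] with s hs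
  simpa [rhs_smul, h0] using hs

theorem eventually_rhs_smul_nonpos {i : ι} {u : ι → ℝ} (hu : 0 < u i) (hβ : ∀ k, 0 ≤ β i k)
    (hbdd : ∀ k, ∃ B, ∀ x, 0 ≤ x → h i k x ≤ B)
    (hM : ∑ j ∈ univ.erase i, a i j * u j < d i * u i) :
    ∀ᶠ R : ℝ in atTop, rhs d a β h (R • u) i ≤ 0 := by
  choose B hB using hbdd
  set γ := d i * u i - ∑ j ∈ univ.erase i, a i j * u j
  have hγ : 0 < γ := sub_pos.2 hM
  filter_upwards [eventually_ge_atTop 0, eventually_ge_atTop ((∑ k, β i k * B k) / γ)]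
    with R hR0 hR
  have hbound : ∑ k, β i k * h i k (R * u i) ≤ ∑ k, β i k * B k :=
    sum_le_sum fun k _ => mul_le_mul_of_nonneg_left (hB k _ (mul_nonneg hR0 hu.le)) (hβ k)
  have hlin : R * (-d i * u i + ∑ j ∈ univ.erase i, a i j * u j) = -(R * γ) := by ring
  rw [div_le_iff₀ hγ] at hR
  rw [rhs_smul, hlin]
  linarith

end DelaySystem

open DelaySystem

theorem stmt8_general
    (n m : ℕ)
    (d : Fin n → ℝ) (a : Fin n → Fin n → ℝ) (β : Fin n → Fin m → ℝ)
    (h : Fin n → Fin m → ℝ → ℝ)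
    (hanneg : ∀ i j, j ≠ i → 0 ≤ a i j)
    (hβnneg : ∀ i k, 0 ≤ β i k)
    -- (H4*)
    (hhbdd : ∀ i k, ∃ B, ∀ x, 0 ≤ x → h i k x ≤ B)
    (hhlip : ∀ i k x, 0 ≤ x → ∃ ε > (0 : ℝ), ∃ L ≥ (0 : ℝ),
        ∀ y ∈ Set.Icc (max 0 (x - ε)) (x + ε), ∀ z ∈ Set.Icc (max 0 (x - ε)) (x + ε),
          |h i k y - h i k z| ≤ L * |y - z|)
    (hhC1 : ∀ i k, ∃ ε > (0 : ℝ), ∃ g : ℝ → ℝ, ContinuousOn g (Set.Icc 0 ε) ∧ g 0 = 1 ∧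
        ∀ x ∈ Set.Icc 0 ε, HasDerivWithinAt (h i k) (g x) (Set.Icc 0 ε) x)
    (hh0 : ∀ i k, h i k 0 = 0)
    -- (i): D - A is a non-singular M-matrix
    (u : Fin n → ℝ) (hu : ∀ i, 0 < u i)
    (hM : ∀ i, ∑ j ∈ Finset.univ.erase i, a i j * u j < d i * u i)
    -- (ii)
    (v : Fin n → ℝ) (hv : ∀ i, 0 < v i)
    (hMv : ∀ i, 0 < ((∑ k, β i k) - d i) * v i + ∑ j ∈ Finset.univ.erase i, a i j * v j) :
    -- positive equilibrium
    ∃ xs : Fin n → ℝ, (∀ i, 0 < xs i) ∧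
      ∀ i, -d i * xs i + (∑ j ∈ Finset.univ.erase i, a i j * xs j)
          + ∑ k, β i k * h i k (xs i) = 0 := by
  have hderiv : ∀ i k, HasDerivWithinAt (h i k) 1 (Ioi 0) 0 := fun i k => by
    obtain ⟨ε, hε, g, -, hg0, hg⟩ := hhC1 i k
    exact hg0 ▸ (hg 0 ⟨le_rfl, hε.le⟩).mono_of_mem_nhdsWithin
      (nhdsWithin_mono _ Set.Ioi_subset_Ici_self (Icc_mem_nhdsGE hε))
  have hcont : ∀ i k y, 0 < y → ContinuousAt (h i k) y := fun i k y hy =>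
    continuousAt_of_lipschitz_near hy (hhlip i k y hy.le)
  obtain ⟨s, hsub, hs⟩ := ((eventually_all.2 fun i =>
    eventually_rhs_smul_pos (hv i) (hderiv i) (hh0 i) (hMv i)).and self_mem_nhdsWithin).exists
  obtain ⟨R, hsup, hle⟩ := ((eventually_all.2 fun i =>
    eventually_rhs_smul_nonpos (hu i) (hβnneg i) (hhbdd i) (hM i)).and
      (eventually_le_smul_atTop hu (s • v))).exists
  have hℓ : ∀ i, 0 < (s • v) i := fun i => mul_pos hs (hv i)
  obtain ⟨x, hx, hzero⟩ := exists_zero_of_subsolution_le_supersolution (rhs d a β h) hle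
    (fun x _ i => continuousOn_rhs_update (hcont i) x (hℓ i)) (rhs_mono hanneg)
    (fun i => (hsub i).le) hsup
  exact ⟨x, fun i => (hℓ i).trans_le (hx.1 i), fun i => congrFun hzero i⟩

/-- Existence of a positive equilibrium for the autonomous system
`x_i' = -d_i x_i + ∑_{j≠i} a_{ij} x_j + ∑_k β_{ik} h_{ik}(x_i(t - τ_{ik}(t)))`
under (H4*), (i) `D - A` a non-singular M-matrix, and (ii) `Mv ≫ 0`. -/
theorem stmt8
    (n m : ℕ) (hn : 1 ≤ n) (hm : 1 ≤ m)
    (d : Fin n → ℝ) (a : Fin n → Fin n → ℝ) (β : Fin n → Fin m → ℝ)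
    (h : Fin n → Fin m → ℝ → ℝ)
    (hdpos : ∀ i, 0 < d i)
    (hanneg : ∀ i j, j ≠ i → 0 ≤ a i j)
    (hadiag : ∀ i, a i i = 0)
    (hβnneg : ∀ i k, 0 ≤ β i k)
    (hβpos : ∀ i, 0 < ∑ k, β i k)
    -- (H4*)
    (hhbdd : ∀ i k, ∃ B, ∀ x, 0 ≤ x → h i k x ≤ B)
    (hhnneg : ∀ i k x, 0 ≤ x → 0 ≤ h i k x)
    (hhlip : ∀ i k x, 0 ≤ x → ∃ ε > (0 : ℝ), ∃ L ≥ (0 : ℝ),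
        ∀ y ∈ Set.Icc (max 0 (x - ε)) (x + ε), ∀ z ∈ Set.Icc (max 0 (x - ε)) (x + ε),
          |h i k y - h i k z| ≤ L * |y - z|)
    (hhC1 : ∀ i k, ∃ ε > (0 : ℝ), ∃ g : ℝ → ℝ, ContinuousOn g (Set.Icc 0 ε) ∧ g 0 = 1 ∧
        ∀ x ∈ Set.Icc 0 ε, HasDerivWithinAt (h i k) (g x) (Set.Icc 0 ε) x)
    (hh0 : ∀ i k, h i k 0 = 0)
    (hhpos : ∀ i k x, 0 < x → 0 < h i k x)
    -- (i): D - A is a non-singular M-matrix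
    (u : Fin n → ℝ) (hu : ∀ i, 0 < u i)
    (hM : ∀ i, ∑ j ∈ Finset.univ.erase i, a i j * u j < d i * u i)
    -- (ii)
    (v : Fin n → ℝ) (hv : ∀ i, 0 < v i)
    (hMv : ∀ i, 0 < ((∑ k, β i k) - d i) * v i + ∑ j ∈ Finset.univ.erase i, a i j * v j) :
    -- positive equilibrium
    ∃ xs : Fin n → ℝ, (∀ i, 0 < xs i) ∧
      ∀ i, -d i * xs i + (∑ j ∈ Finset.univ.erase i, a i j * xs j)
          + ∑ k, β i k * h i k (xs i) = 0 :=
  stmt8_general n m d a β h hanneg hβnneg hhbdd hhlip hhC1 hh0 u hu hM v hv hMv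
end

section
/- Let h(x) = x e^{−x} for x ≥ 0. Fix x ∈ (0, 2) and define G_x : [0, ∞) → ℝ by G_x(y) = (h(y) − h(x))/(y − x) for y ≠ x and G_x(x) = (1 − x)e^{−x}. Then for each m ∈ (0, 1), the supremum δ(x) := sup_{y ≥ m} |G_x(y)| is attained (i.e., it is a maximum over [m, ∞)) and satisfies δ(x) < e^{−x}. -/
open Real Set Filter Topology

/-!
With `h t = t e^{-t}`, the function `G_x` is `dslope h x`. It is continuous, tends to `0` at `+∞`
and is negative for large `y`, so `|G_x|` attains its maximum on `[m, ∞)`. The strict bound holds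
pointwise for `y > 0`: `y e^{-y} - y e^{-x}` has the sign of `x - y`, which gives one side of
`|h y - h x| < e^{-x} |y - x|`; the other side holds because `h' ≥ h' 2 = -e^{-2} > -e^{-x}`
makes `t ↦ h t + e^{-x} t` strictly increasing. At `y = x` the bound is `|1 - x| < 1`.
-/

theorem ContinuousOn.exists_isMaxOn_Ici_of_tendsto {f : ℝ → ℝ} {a l y₀ : ℝ}
    (hf : ContinuousOn f (Ici a)) (hlim : Tendsto f atTop (𝓝 l)) (hy₀ : y₀ ∈ Ici a)
    (hl : l < f y₀) : ∃ z ∈ Ici a, IsMaxOn f (Ici a) z := by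
  refine hf.exists_isMaxOn' isClosed_Ici hy₀ ?_
  rw [eventually_inf_principal, cocompact_eq_atBot_atTop, eventually_sup]
  exact ⟨(eventually_lt_atBot a).mono fun y hya hy => absurd hy (not_le.2 hya),
    (hlim.eventually (gt_mem_nhds hl)).mono fun y hy _ => hy.le⟩

noncomputable def ricker (y : ℝ) : ℝ := y * exp (-y)

theorem hasDerivAt_ricker (x : ℝ) : HasDerivAt ricker ((1 - x) * exp (-x)) x :=
  ((hasDerivAt_id' x).mul (hasDerivAt_neg x).exp).congr_deriv (by ring)

theorem dslope_ricker (x y : ℝ) :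
    dslope ricker x y = if y = x then (1 - x) * exp (-x)
      else (y * exp (-y) - x * exp (-x)) / (y - x) := by
  split_ifs with h
  · rw [h, dslope_same, (hasDerivAt_ricker x).deriv]
  · rw [dslope_of_ne _ h, slope_def_field]; rfl

theorem continuous_ricker : Continuous ricker := by unfold ricker; fun_prop

theorem continuous_dslope_ricker (x : ℝ) : Continuous (dslope ricker x) :=
  continuousOn_univ.1 <| (continuousOn_dslope univ_mem).2
    ⟨continuous_ricker.continuousOn, (hasDerivAt_ricker x).differentiableAt⟩

theorem tendsto_ricker_atTop : Tendsto ricker atTop (𝓝 0) := by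
  show Tendsto (fun y => y * exp (-y)) _ _
  simpa using tendsto_pow_mul_exp_neg_atTop_nhds_zero 1

theorem tendsto_dslope_ricker_atTop (x : ℝ) : Tendsto (dslope ricker x) atTop (𝓝 0) := by
  have : Tendsto (fun y => (ricker y - ricker x) / (y - x)) atTop (𝓝 0) :=
    (tendsto_ricker_atTop.sub_const _).div_atTop (tendsto_atTop_add_const_right _ _ tendsto_id)
  refine this.congr' ((eventually_ne_atTop x).mono fun y hy => ?_)
  rw [dslope_of_ne _ hy, slope_def_field]

theorem eventually_dslope_ricker_neg {x : ℝ} (hx : 0 < x) :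
    ∀ᶠ y in atTop, dslope ricker x y < 0 := by
  have hrx : 0 < ricker x := by unfold ricker; positivity
  filter_upwards [tendsto_ricker_atTop.eventually (gt_mem_nhds hrx), eventually_gt_atTop x]
    with y hy hxy
  rw [dslope_of_ne _ hxy.ne', slope_def_field]
  exact div_neg_of_neg_of_pos (sub_neg.2 hy) (sub_pos.2 hxy)

theorem neg_exp_neg_two_le_deriv_ricker (t : ℝ) : -exp (-2) ≤ (1 - t) * exp (-t) := by
  have h : t - 1 ≤ exp (t - 2) := by linarith [add_one_le_exp (t - 2)]
  have := mul_le_mul_of_nonneg_right h (exp_pos (-t)).le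
  rw [← exp_add] at this
  ring_nf at this ⊢
  linarith

theorem strictMono_ricker_add_mul {c : ℝ} (hc : exp (-2) < c) :
    StrictMono fun t => ricker t + c * t := by
  refine strictMono_of_deriv_pos fun t => ?_
  have hd : HasDerivAt (fun t => ricker t + c * t) ((1 - t) * exp (-t) + c) t :=
    ((hasDerivAt_ricker t).add ((hasDerivAt_id' t).const_mul c)).congr_deriv (by ring)
  rw [hd.deriv]
  linarith [neg_exp_neg_two_le_deriv_ricker t]

theorem abs_ricker_sub_lt {x y : ℝ} (hx : x < 2) (hy : 0 < y) (hxy : y ≠ x) :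
    |ricker y - ricker x| < exp (-x) * |y - x| := by
  have hmono := strictMono_ricker_add_mul (c := exp (-x)) (exp_lt_exp.2 (by linarith))
  unfold ricker at hmono ⊢
  rcases hxy.lt_or_gt with h | h
  · have hψ := hmono h
    have hsign : y * exp (-x) < y * exp (-y) := mul_lt_mul_of_pos_left (exp_lt_exp.2 (by linarith)) hy
    simp only at hψ
    rw [abs_of_neg (sub_neg.2 h), abs_lt]
    constructor <;> linarith
  · have hψ := hmono h
    have hsign : y * exp (-y) < y * exp (-x) := mul_lt_mul_of_pos_left (exp_lt_exp.2 (by linarith)) hy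
    simp only at hψ
    rw [abs_of_pos (sub_pos.2 h), abs_lt]
    constructor <;> linarith

theorem abs_dslope_ricker_lt {x y : ℝ} (hx : x ∈ Ioo 0 2) (hy : 0 < y) :
    |dslope ricker x y| < exp (-x) := by
  rcases eq_or_ne y x with rfl | hxy
  · rw [dslope_same, (hasDerivAt_ricker y).deriv, abs_mul, abs_of_pos (exp_pos _)]
    have : |1 - y| < 1 := abs_lt.2 ⟨by linarith [hx.2], by linarith [hx.1]⟩
    nlinarith [exp_pos (-y)]
  · rw [dslope_of_ne _ hxy, slope_def_field, abs_div,
      div_lt_iff₀ (abs_pos.2 (sub_ne_zero.2 hxy))]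
    exact abs_ricker_sub_lt hx.2 hy hxy

/-- For `h(x) = x e^{-x}`, `x ∈ (0,2)` and the difference quotient `G_x` based at `x`,
for each `m ∈ (0,1)` the supremum `δ(x) = max_{y ≥ m} |G_x(y)|` is attained and
satisfies `δ(x) < e^{-x}`. -/
theorem stmt12
    (x : ℝ) (hx : x ∈ Set.Ioo (0 : ℝ) 2) (m : ℝ) (hm : m ∈ Set.Ioo (0 : ℝ) 1) :
    ∃ δ : ℝ,
      IsGreatest ((fun y => |if y = x then (1 - x) * Real.exp (-x)
          else (y * Real.exp (-y) - x * Real.exp (-x)) / (y - x)|) '' Set.Ici m) δ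
      ∧ δ < Real.exp (-x) := by
  simp_rw [← dslope_ricker]
  obtain ⟨y₀, hneg, hy₀m⟩ :=
    ((eventually_dslope_ricker_neg hx.1).and (eventually_ge_atTop m)).exists
  obtain ⟨z, hz, hmax⟩ :=
    (continuous_dslope_ricker x).abs.continuousOn.exists_isMaxOn_Ici_of_tendsto
      (tendsto_dslope_ricker_atTop x).abs (mem_Ici.2 hy₀m) (by simpa using hneg.ne)
  exact ⟨_, ⟨mem_image_of_mem _ hz, forall_mem_image.2 hmax⟩,
    abs_dslope_ricker_lt hx (hm.1.trans_le hz)⟩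
end

section
/- Consider the periodic Nicholson system x_i'(t) = −d_i(t)x_i(t) + Σ_{j≠i} a_{ij}(t)x_j(t) + β_i(t) x_i(t − m_iω) e^{−c_i(t) x_i(t − m_iω)}, i = 1, …, n, where m_i ∈ ℕ, ω > 0, and d_i, a_{ij}, β_i, c_i : ℝ → ℝ are continuous ω-periodic functions with d_i(t) > 0, β_i(t) > 0, c_i(t) > 0 and a_{ij}(t) ≥ 0 for all t. Suppose v = (v_1, …, v_n) ≫ 0 is such that d_i(t)v_i − Σ_{j≠i} a_{ij}(t)v_j > 0 for all t ∈ [0, ω] and all i, and that α_i(v) := min_{t ∈ [0,ω]} β_i(t)v_i / (d_i(t)v_i − Σ_{j≠i} a_{ij}(t)v_j) > 1 for all i. Define γ_i(v) := max_{t ∈ [0,ω]} β_i(t)v_i / (d_i(t)v_i − Σ_{j≠i} a_{ij}(t)v_j) and c_j^- := min_{t ∈ [0,ω]} c_j(t). Then every differentiable ω-periodic function x* : ℝ → ℝⁿ with x*_i(t) > 0 for all t, i, satisfying the system for all t ∈ ℝ, obeys the bound x*_i(t)/v_i ≤ max_{1≤j≤n} log(γ_j(v)) / (v_j c_j^-)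 for all t ∈ [0, ω] and all i = 1, …, n. -/
open Real Set

/-- A priori bound on positive ω-periodic solutions of the periodic Nicholson system
with delays that are multiples of the period. -/
theorem stmt14
    (n : ℕ) (hn : 1 ≤ n) (ω : ℝ) (hω : 0 < ω)
    (mi : Fin n → ℕ) (hmi : ∀ i, 1 ≤ mi i)
    (d : Fin n → ℝ → ℝ) (a : Fin n → Fin n → ℝ → ℝ)
    (β : Fin n → ℝ → ℝ) (c : Fin n → ℝ → ℝ)
    -- continuity and periodicity
    (hdcont : ∀ i, Continuous (d i))
    (hacont : ∀ i j, j ≠ i → Continuous (a i j))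
    (hβcont : ∀ i, Continuous (β i)) (hccont : ∀ i, Continuous (c i))
    (hdper : ∀ i t, d i (t + ω) = d i t)
    (haper : ∀ i j t, a i j (t + ω) = a i j t)
    (hβper : ∀ i t, β i (t + ω) = β i t)
    (hcper : ∀ i t, c i (t + ω) = c i t)
    -- signs
    (hdpos : ∀ i t, 0 < d i t) (hβpos : ∀ i t, 0 < β i t)
    (hcpos : ∀ i t, 0 < c i t) (hanneg : ∀ i j t, j ≠ i → 0 ≤ a i j t)
    -- the vector v and the condition α_i(v) > 1
    (v : Fin n → ℝ) (hv : ∀ i, 0 < v i)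
    (hden : ∀ i, ∀ t ∈ Set.Icc 0 ω,
        0 < d i t * v i - ∑ j ∈ Finset.univ.erase i, a i j t * v j)
    (hα : ∀ i, 1 < sInf ((fun t => β i t * v i /
        (d i t * v i - ∑ j ∈ Finset.univ.erase i, a i j t * v j)) '' Set.Icc 0 ω)) :
    -- conclusion: bound for every positive ω-periodic solution
    ∀ x : ℝ → Fin n → ℝ,
      (∀ t i, x (t + ω) i = x t i) →
      (∀ t i, 0 < x t i) →
      (∀ t : ℝ, ∀ i, HasDerivAt (fun s => x s i)
          (-d i t * x t i + (∑ j ∈ Finset.univ.erase i, a i j t * x t j)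
            + β i t * x (t - (mi i : ℝ) * ω) i
              * Real.exp (-(c i t) * x (t - (mi i : ℝ) * ω) i)) t) →
      ∀ t ∈ Set.Icc 0 ω, ∀ i,
        x t i / v i ≤ ⨆ j : Fin n,
          Real.log (sSup ((fun s => β j s * v j /
              (d j s * v j - ∑ l ∈ Finset.univ.erase j, a j l s * v l)) '' Set.Icc 0 ω))
            / (v j * sInf ((c j) '' Set.Icc 0 ω)) := by
  intro x hper hpos hderiv t ht i
  haveI : Nonempty (Fin n) := ⟨⟨0, hn⟩⟩
  have hxcont : ∀ j, Continuous fun s => x s j :=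
    fun j => continuous_iff_continuousAt.2 fun s => (hderiv s j).continuousAt
  have hxper : ∀ j, Function.Periodic (fun s => x s j) ω := fun j s => hper s j
  have hIcc : (Icc (0:ℝ) ω).Nonempty := ⟨0, le_refl 0, hω.le⟩
  have hred : ∀ s : ℝ, ∃ s' ∈ Icc (0:ℝ) ω, ∀ j, x s' j = x s j := by
    intro s
    refine ⟨s - ⌊s / ω⌋ * ω, ⟨Int.sub_floor_div_mul_nonneg s hω,
      (Int.sub_floor_div_mul_lt s hω).le⟩, fun j => (hxper j).sub_int_mul_eq _⟩
  choose tm htm hmaxI using fun j : Fin n =>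
    isCompact_Icc.exists_isMaxOn hIcc (hxcont j).continuousOn
  obtain ⟨i0, hi0⟩ := Finite.exists_max fun j => x (tm j) j / v j
  set t0 := tm i0 with ht0def
  have ht0 : t0 ∈ Icc (0:ℝ) ω := htm i0
  have hmax : ∀ s (j : Fin n), x s j / v j ≤ x t0 i0 / v i0 := by
    intro s j
    obtain ⟨s', hs', hxs⟩ := hred s
    have h1 : x s j / v j ≤ x (tm j) j / v j := by
      rw [← hxs j]
      exact div_le_div_of_nonneg_right (hmaxI j hs') (hv j).le
    exact h1.trans (hi0 j)
  have hX : 0 < x t0 i0 := hpos t0 i0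
  have hloc : IsLocalMax (fun s => x s i0) t0 := by
    apply Filter.Eventually.of_forall
    intro s
    have := hmax s i0
    exact (div_le_div_iff_of_pos_right (hv i0)).1 this
  have hzero := hloc.hasDerivAt_eq_zero (hderiv t0 i0)
  have hdel : x (t0 - (mi i0 : ℝ) * ω) i0 = x t0 i0 := (hxper i0).sub_nat_mul_eq (mi i0)
  rw [hdel] at hzero
  set P := d i0 t0 * v i0 - ∑ j ∈ Finset.univ.erase i0, a i0 j t0 * v j with hP
  have hPpos : 0 < P := hden i0 t0 ht0
  have hsum : v i0 * (∑ j ∈ Finset.univ.erase i0, a i0 j t0 * x t0 j)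
      ≤ x t0 i0 * ∑ j ∈ Finset.univ.erase i0, a i0 j t0 * v j := by
    rw [Finset.mul_sum, Finset.mul_sum]
    apply Finset.sum_le_sum
    intro j hj
    have hji : j ≠ i0 := (Finset.mem_erase.mp hj).1
    have h1 : x t0 j * v i0 ≤ x t0 i0 * v j :=
      (div_le_div_iff₀ (hv j) (hv i0)).1 (hmax t0 j)
    nlinarith [mul_le_mul_of_nonneg_left h1 (hanneg i0 j t0 hji)]
  set E := Real.exp (-(c i0 t0) * x t0 i0) with hEdef
  have hEpos : 0 < E := Real.exp_pos _
  have key : P ≤ β i0 t0 * v i0 * E := by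
    nlinarith [hzero, hsum, hX, hv i0, mul_pos hX (hv i0)]
  have hE : E * Real.exp (c i0 t0 * x t0 i0) = 1 := by
    rw [hEdef, ← Real.exp_add]
    ring_nf
    exact Real.exp_zero
  have h3 : P * Real.exp (c i0 t0 * x t0 i0) ≤ β i0 t0 * v i0 := by
    have h4 := mul_le_mul_of_nonneg_right key (Real.exp_pos (c i0 t0 * x t0 i0)).le
    calc P * Real.exp (c i0 t0 * x t0 i0)
        ≤ β i0 t0 * v i0 * E * Real.exp (c i0 t0 * x t0 i0) := h4
      _ = β i0 t0 * v i0 * (E * Real.exp (c i0 t0 * x t0 i0)) := by ring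
      _ = β i0 t0 * v i0 := by rw [hE, mul_one]
  have h2 : Real.exp (c i0 t0 * x t0 i0) ≤ β i0 t0 * v i0 / P := by
    rw [le_div_iff₀ hPpos]
    linarith [h3]
  set γ := sSup ((fun s => β i0 s * v i0 /
      (d i0 s * v i0 - ∑ l ∈ Finset.univ.erase i0, a i0 l s * v l)) '' Set.Icc 0 ω) with hγdef
  have hratcont : ContinuousOn (fun s => β i0 s * v i0 /
      (d i0 s * v i0 - ∑ l ∈ Finset.univ.erase i0, a i0 l s * v l)) (Icc 0 ω) := by
    apply ContinuousOn.div
    · exact ((hβcont i0).mul continuous_const).continuousOn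
    · apply ContinuousOn.sub
      · exact ((hdcont i0).mul continuous_const).continuousOn
      · apply continuousOn_finset_sum
        intro l hl
        exact ((hacont i0 l (Finset.mem_erase.mp hl).1).mul continuous_const).continuousOn
    · exact fun s hs => (hden i0 s hs).ne'
  have hbdd : BddAbove ((fun s => β i0 s * v i0 /
      (d i0 s * v i0 - ∑ l ∈ Finset.univ.erase i0, a i0 l s * v l)) '' Set.Icc 0 ω) :=
    (isCompact_Icc.image_of_continuousOn hratcont).bddAbove
  have hγ : β i0 t0 * v i0 / P ≤ γ := le_csSup hbdd ⟨t0, ht0, rfl⟩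
  have hexpγ : Real.exp (c i0 t0 * x t0 i0) ≤ γ := h2.trans hγ
  have hγpos : 0 < γ := lt_of_lt_of_le (Real.exp_pos _) hexpγ
  have hlog : c i0 t0 * x t0 i0 ≤ Real.log γ := (Real.le_log_iff_exp_le hγpos).2 hexpγ
  set cm := sInf (c i0 '' Icc (0:ℝ) ω) with hcmdef
  obtain ⟨s1, hs1, hcm1⟩ := isCompact_Icc.exists_sInf_image_eq hIcc (hccont i0).continuousOn
  have hcmpos : 0 < cm := by rw [hcmdef, hcm1]; exact hcpos i0 s1
  have hcmle : cm ≤ c i0 t0 :=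
    csInf_le (isCompact_Icc.image_of_continuousOn (hccont i0).continuousOn).bddBelow
      ⟨t0, ht0, rfl⟩
  have hfin : x t0 i0 / v i0 ≤ Real.log γ / (v i0 * cm) := by
    rw [div_le_div_iff₀ (hv i0) (mul_pos (hv i0) hcmpos)]
    nlinarith [mul_le_mul_of_nonneg_right (mul_le_mul_of_nonneg_right hcmle hX.le) (hv i0).le,
      mul_le_mul_of_nonneg_right hlog (hv i0).le]
  have hstep : Real.log γ / (v i0 * cm) ≤ ⨆ j : Fin n,
      Real.log (sSup ((fun s => β j s * v j /
          (d j s * v j - ∑ l ∈ Finset.univ.erase j, a j l s * v l)) '' Set.Icc 0 ω))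
        / (v j * sInf ((c j) '' Set.Icc 0 ω)) := by
    rw [hγdef, hcmdef]
    exact le_ciSup (f := fun j : Fin n =>
      Real.log (sSup ((fun s => β j s * v j /
          (d j s * v j - ∑ l ∈ Finset.univ.erase j, a j l s * v l)) '' Set.Icc 0 ω))
        / (v j * sInf ((c j) '' Set.Icc 0 ω))) (Finite.bddAbove_range _) i0
  exact (hmax t i).trans (hfin.trans hstep)
end
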